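/- arXiv:gr-qc/9710012 — 4 statements merged into one kernel-verified Lean document; each statement's English description precedes it below -/
import Mathlib

section
/- Let f: ℝ → ℂ be a normalised wave function with positive-momentum support such that f and its derivative f' exist and are integrable, and suppose there are constants C > 0, L > 1, α > 1/2 and ε > 0 with |f(y)| ≤ C/(−y)^{1+ε} for all y ≤ −L and |f(y)| ≤ C/y^{1+α} for all y ≥ L. Then the mean number of spontaneously created particles is finite: N[f] < ∞. If moreover ε > 1/2, then also the thermal average is finite: N^Th_{2π}[f] < ∞. -/
open MeasureTheory Real Filter Set Topology ComplexConjugate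
open scoped ENNReal NNReal

noncomputable section

/-- CGHS transformation `x(y) = -log(1 + e^{-y})`. -/
def xC (y : ℝ) : ℝ := -Real.log (1 + Real.exp (-y))

/-- Thermal transformation `x_Th(y) = -e^{-y}`. -/
def xT (y : ℝ) : ℝ := -Real.exp (-y)

/-- Incoming Fourier transform at momentum `-k` w.r.t. the transformation `x`:
`(2π)^{-1/2} ∫ f(y) e^{i k x(y)} dy`. -/
def FcheckX (x : ℝ → ℝ) (f : ℝ → ℂ) (k : ℝ) : ℂ :=
  (Real.sqrt (2 * π) : ℂ)⁻¹ * ∫ y : ℝ, f y * Complex.exp (Complex.I * (k : ℂ) * (x y : ℂ))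

/-- Fourier transform `f̂(p) = (2π)^{-1/2} ∫ f(y) e^{-ipy} dy`. -/
def FT (f : ℝ → ℂ) (p : ℝ) : ℂ :=
  (Real.sqrt (2 * π) : ℂ)⁻¹ * ∫ y : ℝ, f y * Complex.exp (-(Complex.I * (p : ℂ) * (y : ℂ)))

/-- Mean number of spontaneously created particles `N[f] = ∫₀^∞ |F̌(-k)|²/(2k) dk`. -/
def Nbar (f : ℝ → ℂ) : ℝ≥0∞ :=
  ∫⁻ k in Set.Ioi (0:ℝ), ENNReal.ofReal (‖FcheckX xC f k‖ ^ 2 / (2 * k))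

/-- Thermal average at inverse temperature `2π`:
`N^Th_{2π}[f] = ∫₀^∞ (|f̂(p)|²/(2p)) (e^{2πp} - 1)⁻¹ dp`. -/
def NTh (f : ℝ → ℂ) : ℝ≥0∞ :=
  ∫⁻ p in Set.Ioi (0:ℝ), ENNReal.ofReal (‖FT f p‖ ^ 2 / (2 * p) / (Real.exp (2 * π * p) - 1))

/-- Translate of `f` by `y₀`: `f_{y₀}(y) = f(y - y₀)`. -/
def transl (f : ℝ → ℂ) (y₀ : ℝ) : ℝ → ℂ := fun y => f (y - y₀)

lemma norm_exp_I_mul (r : ℝ) : ‖Complex.exp (Complex.I * (r : ℂ))‖ = 1 := by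
  rw [Complex.norm_exp]
  simp

lemma integrable_mul_exp_I {f : ℝ → ℂ} (hf : Integrable f) {θ : ℝ → ℝ} (hθ : Measurable θ) :
    Integrable (fun y => f y * Complex.exp (Complex.I * (θ y : ℂ))) := by
  have : (fun y => f y * Complex.exp (Complex.I * (θ y : ℂ)))
      = fun y => Complex.exp (Complex.I * (θ y : ℂ)) * f y := by funext y; ring
  rw [this]
  refine hf.bdd_mul (c := 1) ?_ (Filter.Eventually.of_forall fun y => by rw [norm_exp_I_mul])
  exact (Complex.measurable_exp.comp
    (measurable_const.mul (Complex.measurable_ofReal.comp hθ))).aestronglyMeasurable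

lemma norm_exp_I_sub_one (t : ℝ) : ‖Complex.exp (Complex.I * (t : ℂ)) - 1‖ ≤ 2 * min 1 |t| := by
  rcases le_or_gt |t| 1 with h | h
  · have h2 : ‖Complex.I * (t : ℂ)‖ ≤ 1 := by
      simpa using h
    calc ‖Complex.exp (Complex.I * (t : ℂ)) - 1‖
        ≤ 2 * ‖Complex.I * (t : ℂ)‖ := Complex.norm_exp_sub_one_le h2
      _ = 2 * |t| := by simp
      _ = 2 * min 1 |t| := by rw [min_eq_right h]
  · calc ‖Complex.exp (Complex.I * (t : ℂ)) - 1‖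
        ≤ ‖Complex.exp (Complex.I * (t : ℂ))‖ + ‖(1 : ℂ)‖ := norm_sub_le _ _
      _ = 2 * 1 := by rw [norm_exp_I_mul]; norm_num
      _ = 2 * min 1 |t| := by rw [min_eq_left h.le]

lemma min_one_le_rpow {x δ : ℝ} (hx : 0 ≤ x) (hδ0 : 0 < δ) (hδ1 : δ ≤ 1) :
    min 1 x ≤ x ^ δ := by
  rcases le_or_gt x 1 with h | h
  · rw [min_eq_right h]
    rcases eq_or_lt_of_le hx with h0 | h0
    · simp [← h0, Real.zero_rpow hδ0.ne']
    · calc x = x ^ (1:ℝ) := (Real.rpow_one x).symm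
        _ ≤ x ^ δ := Real.rpow_le_rpow_of_exponent_ge h0 h hδ1
  · rw [min_eq_left h.le]
    exact Real.one_le_rpow h.le hδ0.le

lemma exp_neg_rw (p y : ℝ) :
    Complex.exp (-(Complex.I * (p : ℂ) * (y : ℂ))) = Complex.exp (Complex.I * ((-p * y : ℝ) : ℂ)) := by
  push_cast; ring_nf

lemma integrable_mul_exp_neg {f : ℝ → ℂ} (hf : Integrable f) (p : ℝ) :
    Integrable (fun y => f y * Complex.exp (-(Complex.I * (p : ℂ) * (y : ℂ)))) := by
  simp_rw [exp_neg_rw]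
  exact integrable_mul_exp_I hf (measurable_id.const_mul (-p))

lemma sqrt_two_pi_pos : (0:ℝ) < Real.sqrt (2 * π) := Real.sqrt_pos.2 (by positivity)

lemma integral_eq_zero_of_FT {f : ℝ → ℂ} (hf : Integrable f)
    (hsupp : ∀ p < (0:ℝ), FT f p = 0) : ∫ y : ℝ, f y = 0 := by
  set G : ℝ → ℂ := fun p => ∫ y : ℝ, f y * Complex.exp (-(Complex.I * (p : ℂ) * (y : ℂ))) with hG
  have hcont : ContinuousAt G 0 := by
    apply MeasureTheory.continuousAt_of_dominated (bound := fun y => ‖f y‖)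
    · filter_upwards with p
      exact (integrable_mul_exp_neg hf p).aestronglyMeasurable
    · filter_upwards with p
      filter_upwards with y
      rw [norm_mul, exp_neg_rw, norm_exp_I_mul, mul_one]
    · exact hf.norm
    · filter_upwards with y
      have : Continuous fun p : ℝ => f y * Complex.exp (-(Complex.I * (p : ℂ) * (y : ℂ))) := by
        continuity
      exact this.continuousAt
  have hzero : ∀ᶠ p in 𝓝[<] (0:ℝ), G p = 0 := by
    filter_upwards [self_mem_nhdsWithin] with p (hp : p < 0)
    have := hsupp p hp
    rw [FT] at this
    rcases mul_eq_zero.1 this with h | h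
    · exact absurd h (by
        simpa using (inv_ne_zero (by exact_mod_cast sqrt_two_pi_pos.ne' : ((Real.sqrt (2*π):ℝ):ℂ) ≠ 0)))
    · exact h
  have hlim : Tendsto G (𝓝[<] (0:ℝ)) (𝓝 (G 0)) :=
    (hcont.continuousWithinAt : ContinuousWithinAt G (Iio 0) 0)
  have hlim0 : Tendsto G (𝓝[<] (0:ℝ)) (𝓝 0) := by
    rw [tendsto_congr' hzero]; exact tendsto_const_nhds
  have : G 0 = 0 := tendsto_nhds_unique hlim hlim0
  rw [hG] at this
  simpa using this

lemma integrable_weight {f : ℝ → ℂ} (hf : Integrable f) {C L α ε δ : ℝ}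
    (hC : 0 < C) (hL : 1 < L)
    (hleft : ∀ y : ℝ, y ≤ -L → ‖f y‖ ≤ C / (-y) ^ (1 + ε))
    (hright : ∀ y : ℝ, L ≤ y → ‖f y‖ ≤ C / y ^ (1 + α))
    (hδ0 : 0 < δ) (hδε : δ < ε) (hδα : δ < α) :
    Integrable (fun y : ℝ => ‖f y‖ * (1 + |y|) ^ δ) := by
  have hcw : Continuous (fun y : ℝ => (1 + |y|) ^ δ) :=
    (continuous_const.add continuous_abs).rpow_const (fun x => Or.inr hδ0.le)
  have hmeas : AEStronglyMeasurable (fun y : ℝ => ‖f y‖ * (1 + |y|) ^ δ) volume :=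
    hf.norm.aestronglyMeasurable.mul hcw.aestronglyMeasurable
  rw [← integrableOn_univ, ← Set.Iic_union_Ioi (a := (-L)),
    ← Set.Ioc_union_Ioi_eq_Ioi (by linarith : -L ≤ L)]
  have hIoiL : IntegrableOn (fun y : ℝ => ‖f y‖ * (1 + |y|) ^ δ) (Set.Ioi L) := by
    have hmaj : IntegrableOn (fun y : ℝ => (C * 2 ^ δ) * y ^ (δ - (1 + α))) (Set.Ioi L) :=
      (integrableOn_Ioi_rpow_of_lt (by linarith) (by linarith)).const_mul _
    refine Integrable.mono' hmaj (hmeas.restrict) ?_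
    filter_upwards [ae_restrict_mem measurableSet_Ioi] with y (hy : L < y)
    have hy1 : (1:ℝ) < y := lt_trans hL hy
    have hy0 : (0:ℝ) < y := by linarith
    rw [Real.norm_eq_abs, abs_of_nonneg (by positivity)]
    have h1 : (1 + |y|) ^ δ ≤ (2 * y) ^ δ := by
      apply Real.rpow_le_rpow (by positivity) _ hδ0.le
      rw [abs_of_pos hy0]; linarith
    have h2 : ‖f y‖ ≤ C / y ^ (1 + α) := hright y hy.le
    calc ‖f y‖ * (1 + |y|) ^ δ ≤ (C / y ^ (1 + α)) * ((2 * y) ^ δ) := by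
          apply mul_le_mul h2 h1 (by positivity) (by positivity)
      _ = (C * 2 ^ δ) * y ^ (δ - (1 + α)) := by
          have hne : y ^ (1 + α) ≠ 0 := by positivity
          rw [Real.mul_rpow (by norm_num) hy0.le, Real.rpow_sub hy0]
          field_simp
  have hIicL : IntegrableOn (fun y : ℝ => ‖f y‖ * (1 + |y|) ^ δ) (Set.Iic (-L)) := by
    have hneg : IntegrableOn (fun y : ℝ => (C * 2 ^ δ) * (-y) ^ (δ - (1 + ε))) (Set.Iic (-L)) := by
      have h0 : IntegrableOn (fun y : ℝ => (C * 2 ^ δ) * y ^ (δ - (1 + ε))) (Set.Ioi L) :=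
        (integrableOn_Ioi_rpow_of_lt (by linarith) (by linarith)).const_mul _
      have h1 := (MeasurePreserving.integrableOn_comp_preimage
          (Measure.measurePreserving_neg (volume : Measure ℝ))
          (Homeomorph.neg ℝ).measurableEmbedding
          (f := fun y : ℝ => (C * 2 ^ δ) * y ^ (δ - (1 + ε))) (s := Set.Ioi L)).2 h0
      have h1 : IntegrableOn (fun y : ℝ => (C * 2 ^ δ) * (-y) ^ (δ - (1 + ε)))
          (Neg.neg ⁻¹' (Set.Ioi L)) := h1
      have h2 : Neg.neg ⁻¹' (Set.Ioi L) = Set.Iio (-L) := by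
        ext y; simp [lt_neg]
      rw [h2] at h1
      rwa [integrableOn_Iic_iff_integrableOn_Iio]
    refine Integrable.mono' hneg (hmeas.restrict) ?_
    filter_upwards [ae_restrict_mem measurableSet_Iic] with y (hy : y ≤ -L)
    have hy1 : y < -1 := by linarith
    have hy0 : (0:ℝ) < -y := by linarith
    rw [Real.norm_eq_abs, abs_of_nonneg (by positivity)]
    have h1 : (1 + |y|) ^ δ ≤ (2 * (-y)) ^ δ := by
      apply Real.rpow_le_rpow (by positivity) _ hδ0.le
      rw [abs_of_neg (by linarith)]; linarith
    have h2 : ‖f y‖ ≤ C / (-y) ^ (1 + ε) := hleft y hy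
    calc ‖f y‖ * (1 + |y|) ^ δ ≤ (C / (-y) ^ (1 + ε)) * ((2 * (-y)) ^ δ) := by
          apply mul_le_mul h2 h1 (by positivity) (by positivity)
      _ = (C * 2 ^ δ) * (-y) ^ (δ - (1 + ε)) := by
          have hne : (-y) ^ (1 + ε) ≠ 0 := by positivity
          rw [Real.mul_rpow (by norm_num) hy0.le, Real.rpow_sub hy0]
          field_simp
  have hmid : IntegrableOn (fun y : ℝ => ‖f y‖ * (1 + |y|) ^ δ) (Set.Ioc (-L) L) := by
    refine Integrable.mono' ((hf.norm.const_mul ((1 + L) ^ δ)).integrableOn) (hmeas.restrict) ?_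
    filter_upwards [ae_restrict_mem measurableSet_Ioc] with y hy
    rw [Real.norm_eq_abs, abs_of_nonneg (by positivity)]
    have habs : |y| ≤ L := abs_le.2 ⟨hy.1.le, hy.2⟩
    have : (1 + |y|) ^ δ ≤ (1 + L) ^ δ := by
      apply Real.rpow_le_rpow (by positivity) _ hδ0.le
      linarith
    calc ‖f y‖ * (1 + |y|) ^ δ ≤ ‖f y‖ * (1 + L) ^ δ :=
          mul_le_mul_of_nonneg_left this (norm_nonneg _)
      _ = (1 + L) ^ δ * ‖f y‖ := by ring
  exact (hIicL.union (hmid.union hIoiL))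

-- Hölder-type bound

lemma holder_bound {f : ℝ → ℂ} (hf : Integrable f) (hzero : ∫ y : ℝ, f y = 0)
    {δ : ℝ} (hδ0 : 0 < δ) (hδ1 : δ ≤ 1)
    (hI : Integrable (fun y : ℝ => ‖f y‖ * (1 + |y|) ^ δ))
    {θ : ℝ → ℝ} (hθ : Measurable θ) (hθb : ∀ y, |θ y| ≤ 1 + |y|)
    {k : ℝ} (hk : 0 < k) :
    ‖∫ y : ℝ, f y * Complex.exp (Complex.I * ((k * θ y : ℝ) : ℂ))‖
      ≤ (2 * ∫ y : ℝ, ‖f y‖ * (1 + |y|) ^ δ) * k ^ δ := by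
  have hint : Integrable (fun y => f y * Complex.exp (Complex.I * ((k * θ y : ℝ) : ℂ))) :=
    integrable_mul_exp_I hf (hθ.const_mul k)
  have key : (∫ y : ℝ, f y * Complex.exp (Complex.I * ((k * θ y : ℝ) : ℂ)))
      = ∫ y : ℝ, f y * (Complex.exp (Complex.I * ((k * θ y : ℝ) : ℂ)) - 1) := by
    rw [show (fun y : ℝ => f y * (Complex.exp (Complex.I * ((k * θ y : ℝ) : ℂ)) - 1))
        = fun y => f y * Complex.exp (Complex.I * ((k * θ y : ℝ) : ℂ)) - f y by
      funext y; ring]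
    rw [integral_sub hint hf, hzero, sub_zero]
  rw [key]
  have hbound : ∀ y : ℝ, ‖f y * (Complex.exp (Complex.I * ((k * θ y : ℝ) : ℂ)) - 1)‖
      ≤ 2 * k ^ δ * (‖f y‖ * (1 + |y|) ^ δ) := by
    intro y
    rw [norm_mul]
    have h1 : ‖Complex.exp (Complex.I * ((k * θ y : ℝ) : ℂ)) - 1‖ ≤ 2 * min 1 |k * θ y| :=
      norm_exp_I_sub_one _
    have h2 : min 1 |k * θ y| ≤ min 1 (k * (1 + |y|)) := by
      apply min_le_min le_rfl
      rw [abs_mul, abs_of_pos hk]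
      exact mul_le_mul_of_nonneg_left (hθb y) hk.le
    have h3 : min 1 (k * (1 + |y|)) ≤ (k * (1 + |y|)) ^ δ :=
      min_one_le_rpow (by positivity) hδ0 hδ1
    have h4 : (k * (1 + |y|)) ^ δ = k ^ δ * (1 + |y|) ^ δ :=
      Real.mul_rpow hk.le (by positivity)
    calc ‖f y‖ * ‖Complex.exp (Complex.I * ((k * θ y : ℝ) : ℂ)) - 1‖
        ≤ ‖f y‖ * (2 * (k ^ δ * (1 + |y|) ^ δ)) := by
          apply mul_le_mul_of_nonneg_left _ (norm_nonneg _)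
          calc ‖Complex.exp (Complex.I * ((k * θ y : ℝ) : ℂ)) - 1‖
              ≤ 2 * min 1 |k * θ y| := h1
            _ ≤ 2 * min 1 (k * (1 + |y|)) := by linarith
            _ ≤ 2 * (k ^ δ * (1 + |y|) ^ δ) := by rw [← h4]; linarith
      _ = 2 * k ^ δ * (‖f y‖ * (1 + |y|) ^ δ) := by ring
  calc ‖∫ y : ℝ, f y * (Complex.exp (Complex.I * ((k * θ y : ℝ) : ℂ)) - 1)‖
      ≤ ∫ y : ℝ, 2 * k ^ δ * (‖f y‖ * (1 + |y|) ^ δ) :=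
        norm_integral_le_of_norm_le (hI.const_mul _) (Filter.Eventually.of_forall hbound)
    _ = (2 * ∫ y : ℝ, ‖f y‖ * (1 + |y|) ^ δ) * k ^ δ := by
        rw [integral_const_mul]; ring

lemma continuous_xC : Continuous xC := by
  have h : Continuous fun y : ℝ => 1 + Real.exp (-y) :=
    continuous_const.add (Real.continuous_exp.comp continuous_neg)
  exact (h.log (fun x => by positivity)).neg

lemma hasDerivAt_xC (y : ℝ) :
    HasDerivAt xC (Real.exp (-y) / (1 + Real.exp (-y))) y := by
  have h1 : HasDerivAt (fun y : ℝ => 1 + Real.exp (-y)) (-Real.exp (-y)) y := by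
    have := ((Real.hasDerivAt_exp (-y)).comp y (hasDerivAt_neg y))
    exact (this.const_add 1).congr_deriv (by ring)
  have h2 : HasDerivAt (fun y : ℝ => Real.log (1 + Real.exp (-y)))
      ((1 + Real.exp (-y))⁻¹ * (-Real.exp (-y))) y :=
    (Real.hasDerivAt_log (by positivity)).comp y h1
  have h3 := h2.neg
  refine h3.congr_deriv ?_
  ring

lemma ibp_bound {f : ℝ → ℂ} (hf : Integrable f) (hdiff : Differentiable ℝ f)
    (hf' : Integrable (deriv f)) {C L α : ℝ} (hC : 0 < C) (hL : 1 < L) (hα : 0 < α)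
    (hright : ∀ y : ℝ, L ≤ y → ‖f y‖ ≤ C / y ^ (1 + α))
    {k Y : ℝ} (hk : 0 < k) (hY : L ≤ Y) :
    ‖∫ y : ℝ, f y * Complex.exp (Complex.I * ((k * xC y : ℝ) : ℂ))‖
      ≤ (1 + Real.exp Y) * (C + ((∫ y : ℝ, ‖deriv f y‖) + ∫ y : ℝ, ‖f y‖)) / k
        + C * (Y ^ (-α) / α) := by
  set φ : ℝ → ℂ := fun y => Complex.exp (Complex.I * ((k * xC y : ℝ) : ℂ)) with hφdef
  have hnormφ : ∀ y, ‖φ y‖ = 1 := fun y => norm_exp_I_mul _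
  have hφcont : Continuous φ :=
    Complex.continuous_exp.comp (continuous_const.mul
      (Complex.continuous_ofReal.comp (continuous_const.mul continuous_xC)))
  -- integrability of f * φ
  have hfφ : Integrable (fun y => f y * φ y) :=
    integrable_mul_exp_I hf (continuous_xC.measurable.const_mul k)
  -- G and its derivative
  set G : ℝ → ℂ := fun y => f y * ((1 + Real.exp y : ℝ) : ℂ) * φ y with hGdef
  set g' : ℝ → ℂ := fun y =>
    deriv f y * ((1 + Real.exp y : ℝ) : ℂ) + f y * ((Real.exp y : ℝ) : ℂ) with hg'def
  have hG : ∀ y : ℝ, HasDerivAt G (g' y * φ y + Complex.I * k * (f y * φ y)) y := by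
    intro y
    have hg : HasDerivAt (fun y : ℝ => f y * ((1 + Real.exp y : ℝ) : ℂ)) (g' y) y := by
      have h1 : HasDerivAt (fun y : ℝ => ((1 + Real.exp y : ℝ) : ℂ))
          ((Real.exp y : ℝ) : ℂ) y := by
        have : HasDerivAt (fun y : ℝ => 1 + Real.exp y) (Real.exp y) y := by
          exact (Real.hasDerivAt_exp y).const_add 1
        exact this.ofReal_comp
      exact (hdiff y).hasDerivAt.mul h1
    have hφ : HasDerivAt φ
        (φ y * (Complex.I * ((k * (Real.exp (-y) / (1 + Real.exp (-y))) : ℝ) : ℂ))) y := by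
      have h1 : HasDerivAt (fun y : ℝ => ((k * xC y : ℝ) : ℂ))
          (((k * (Real.exp (-y) / (1 + Real.exp (-y))) : ℝ)) : ℂ) y :=
        ((hasDerivAt_xC y).const_mul k).ofReal_comp
      have h2 : HasDerivAt (fun y : ℝ => Complex.I * ((k * xC y : ℝ) : ℂ))
          (Complex.I * ((k * (Real.exp (-y) / (1 + Real.exp (-y))) : ℝ) : ℂ)) y :=
        h1.const_mul Complex.I
      simpa [hφdef, mul_comm] using h2.cexp
    have hmul := hg.mul hφ
    have hone : (1 + Real.exp y) * (Real.exp (-y) / (1 + Real.exp (-y))) = 1 := by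
      have h1 : 1 + Real.exp (-y) ≠ 0 := by positivity
      field_simp
      rw [add_mul, ← Real.exp_add]
      simp [add_comm]
    have hcast : ((1 + Real.exp y : ℝ) : ℂ) * ((Real.exp (-y) / (1 + Real.exp (-y)) : ℝ) : ℂ)
        = 1 := by
      rw [← Complex.ofReal_mul, hone, Complex.ofReal_one]
    refine hmul.congr_deriv ?_
    push_cast at hcast ⊢
    linear_combination (Complex.I * k * f y * φ y) * hcast
  -- limit of G at -∞
  have hf0 : Tendsto f atBot (𝓝 0) :=
    tendsto_zero_of_hasDerivAt_of_integrableOn_Iic (a := 0)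
      (fun x _ => (hdiff x).hasDerivAt) hf'.integrableOn hf.integrableOn
  have hGlim : Tendsto G atBot (𝓝 0) := by
    have hb : ∀ᶠ y in atBot, ‖G y‖ ≤ 2 * ‖f y‖ := by
      filter_upwards [eventually_le_atBot (0:ℝ)] with y hy
      have h1 : (0:ℝ) < 1 + Real.exp y := by positivity
      have h2 : 1 + Real.exp y ≤ 2 := by
        have := Real.exp_le_one_iff.2 hy
        linarith [Real.exp_le_one_iff.2 hy]
      calc ‖G y‖ = ‖f y‖ * ‖((1 + Real.exp y : ℝ) : ℂ)‖ * ‖φ y‖ := by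
            rw [hGdef, norm_mul, norm_mul]
        _ = ‖f y‖ * (1 + Real.exp y) := by
            rw [hnormφ, Complex.norm_real, Real.norm_eq_abs, abs_of_pos h1, mul_one]
        _ ≤ ‖f y‖ * 2 := mul_le_mul_of_nonneg_left h2 (norm_nonneg _)
        _ = 2 * ‖f y‖ := by ring
    have h0 : Tendsto (fun y => 2 * ‖f y‖) atBot (𝓝 0) := by
      have := (hf0.norm).const_mul (2:ℝ)
      simpa using this
    exact squeeze_zero_norm' hb h0
  -- integrability of the pieces on Iic Y
  have hASMφ : AEStronglyMeasurable φ volume := hφcont.aestronglyMeasurable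
  have hg'φASM : AEStronglyMeasurable (fun y => g' y * φ y) volume := by
    refine AEStronglyMeasurable.mul ?_ hASMφ
    refine AEStronglyMeasurable.add ?_ ?_
    · exact hf'.1.mul ((Complex.continuous_ofReal.comp
        (continuous_const.add Real.continuous_exp)).aestronglyMeasurable)
    · exact hf.1.mul ((Complex.continuous_ofReal.comp
        Real.continuous_exp).aestronglyMeasurable)
  have hg'φbound : ∀ y : ℝ, y ≤ Y →
      ‖g' y * φ y‖ ≤ (1 + Real.exp Y) * (‖deriv f y‖ + ‖f y‖) := by
    intro y hy
    have he : Real.exp y ≤ Real.exp Y := Real.exp_le_exp.2 hy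
    have h1 : (0:ℝ) < 1 + Real.exp y := by positivity
    rw [norm_mul, hnormφ, mul_one]
    calc ‖g' y‖ ≤ ‖deriv f y * ((1 + Real.exp y : ℝ) : ℂ)‖ + ‖f y * ((Real.exp y : ℝ) : ℂ)‖ :=
          norm_add_le _ _
      _ = ‖deriv f y‖ * (1 + Real.exp y) + ‖f y‖ * Real.exp y := by
          rw [norm_mul, norm_mul, Complex.norm_real, Complex.norm_real, Real.norm_eq_abs,
            Real.norm_eq_abs, abs_of_pos h1, abs_of_pos (Real.exp_pos y)]
      _ ≤ ‖deriv f y‖ * (1 + Real.exp Y) + ‖f y‖ * (1 + Real.exp Y) := by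
          have ha : (1:ℝ) + Real.exp y ≤ 1 + Real.exp Y := by linarith
          have hb : Real.exp y ≤ 1 + Real.exp Y := by linarith [Real.exp_pos Y]
          exact add_le_add (mul_le_mul_of_nonneg_left ha (norm_nonneg _))
            (mul_le_mul_of_nonneg_left hb (norm_nonneg _))
      _ = (1 + Real.exp Y) * (‖deriv f y‖ + ‖f y‖) := by ring
  have hg'φint : IntegrableOn (fun y => g' y * φ y) (Set.Iic Y) := by
    refine Integrable.mono' (((hf'.norm.add hf.norm).const_mul (1 + Real.exp Y)).integrableOn)
      hg'φASM.restrict ?_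
    filter_upwards [ae_restrict_mem measurableSet_Iic] with y hy
    exact hg'φbound y hy
  have hG'int : IntegrableOn (fun y => g' y * φ y + Complex.I * k * (f y * φ y)) (Set.Iic Y) :=
    hg'φint.add (((hfφ.const_mul _)).integrableOn)
  -- FTC on Iic Y
  have hFTC : ∫ y in Set.Iic Y, (g' y * φ y + Complex.I * k * (f y * φ y)) = G Y - 0 :=
    integral_Iic_of_hasDerivAt_of_tendsto' (fun x _ => hG x) hG'int hGlim
  have hsplit : ∫ y in Set.Iic Y, (g' y * φ y + Complex.I * k * (f y * φ y))
      = (∫ y in Set.Iic Y, g' y * φ y) + Complex.I * k * ∫ y in Set.Iic Y, f y * φ y := by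
    rw [integral_add hg'φint ((hfφ.const_mul _).integrableOn), integral_const_mul]
  have hkey : Complex.I * k * ∫ y in Set.Iic Y, f y * φ y
      = G Y - ∫ y in Set.Iic Y, g' y * φ y := by
    rw [hsplit] at hFTC
    rw [sub_zero] at hFTC
    linear_combination hFTC
  -- norm bounds
  have hGYnorm : ‖G Y‖ ≤ C * (1 + Real.exp Y) := by
    have h1 : (0:ℝ) < 1 + Real.exp Y := by positivity
    have hY1 : (1:ℝ) ≤ Y := by linarith
    have h2 : ‖f Y‖ ≤ C :=
      (hright Y hY).trans (div_le_self hC.le (Real.one_le_rpow hY1 (by positivity)))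
    calc ‖G Y‖ = ‖f Y‖ * ‖((1 + Real.exp Y : ℝ) : ℂ)‖ * ‖φ Y‖ := by
          rw [hGdef, norm_mul, norm_mul]
      _ = ‖f Y‖ * (1 + Real.exp Y) := by
          rw [hnormφ, Complex.norm_real, Real.norm_eq_abs, abs_of_pos h1, mul_one]
      _ ≤ C * (1 + Real.exp Y) := mul_le_mul_of_nonneg_right h2 h1.le
  set S : ℝ := (∫ y : ℝ, ‖deriv f y‖) + ∫ y : ℝ, ‖f y‖ with hSdef
  have hSnonneg : 0 ≤ S := by
    rw [hSdef]
    positivity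
  have hIicnorm : ‖∫ y in Set.Iic Y, g' y * φ y‖ ≤ (1 + Real.exp Y) * S := by
    have hmaj : Integrable (fun y => (1 + Real.exp Y) * (‖deriv f y‖ + ‖f y‖))
        (volume.restrict (Set.Iic Y)) := ((hf'.norm.add hf.norm).const_mul _).integrableOn
    have h1 := norm_integral_le_of_norm_le hmaj (by
      filter_upwards [ae_restrict_mem measurableSet_Iic] with y hy
      exact hg'φbound y hy)
    refine h1.trans ?_
    rw [integral_const_mul]
    apply mul_le_mul_of_nonneg_left _ (by positivity)
    have h2 : ∫ y in Set.Iic Y, (‖deriv f y‖ + ‖f y‖) ≤ ∫ y : ℝ, (‖deriv f y‖ + ‖f y‖) :=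
      setIntegral_le_integral (hf'.norm.add hf.norm)
        (Filter.Eventually.of_forall fun y => by positivity)
    rw [integral_add hf'.norm hf.norm] at h2
    exact h2
  have hIic2 : ‖∫ y in Set.Iic Y, f y * φ y‖ ≤ (1 + Real.exp Y) * (C + S) / k := by
    rw [le_div_iff₀ hk]
    have hknorm : ‖Complex.I * (k : ℂ)‖ = k := by
      rw [norm_mul, Complex.norm_I, one_mul, Complex.norm_real, Real.norm_eq_abs,
        abs_of_pos hk]
    have h1 : ‖Complex.I * (k : ℂ) * ∫ y in Set.Iic Y, f y * φ y‖
        = k * ‖∫ y in Set.Iic Y, f y * φ y‖ := by rw [norm_mul, hknorm]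
    have h2 : ‖G Y - ∫ y in Set.Iic Y, g' y * φ y‖ ≤ C * (1 + Real.exp Y)
        + (1 + Real.exp Y) * S := by
      calc ‖G Y - ∫ y in Set.Iic Y, g' y * φ y‖
          ≤ ‖G Y‖ + ‖∫ y in Set.Iic Y, g' y * φ y‖ := norm_sub_le _ _
        _ ≤ C * (1 + Real.exp Y) + (1 + Real.exp Y) * S := add_le_add hGYnorm hIicnorm
    have h3 : k * ‖∫ y in Set.Iic Y, f y * φ y‖ ≤ (1 + Real.exp Y) * (C + S) := by
      rw [← h1, hkey]
      refine h2.trans (le_of_eq ?_)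
      ring
    linarith [h3]
  have htail : ‖∫ y in Set.Ioi Y, f y * φ y‖ ≤ C * (Y ^ (-α) / α) := by
    have hY0 : (0:ℝ) < Y := by linarith
    have hint : IntegrableOn (fun y : ℝ => C * y ^ (-(1 + α))) (Set.Ioi Y) :=
      (integrableOn_Ioi_rpow_of_lt (by linarith) hY0).const_mul C
    have h1 := norm_integral_le_of_norm_le (f := fun y => f y * φ y) hint (by
      filter_upwards [ae_restrict_mem measurableSet_Ioi] with y (hy : Y < y)
      have hy0 : (0:ℝ) < y := lt_trans hY0 hy
      rw [norm_mul, hnormφ, mul_one]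
      calc ‖f y‖ ≤ C / y ^ (1 + α) := hright y (le_trans hY hy.le)
        _ = C * y ^ (-(1 + α)) := by rw [Real.rpow_neg hy0.le, div_eq_mul_inv])
    refine h1.trans ?_
    rw [integral_const_mul, integral_Ioi_rpow_of_lt (by linarith) hY0]
    rw [show (-(1 + α)) + 1 = -α by ring]
    rw [neg_div_neg_eq]
  have hsplitint : (∫ y : ℝ, f y * φ y)
      = (∫ y in Set.Iic Y, f y * φ y) + ∫ y in Set.Ioi Y, f y * φ y := by
    rw [← setIntegral_univ, ← Set.Iic_union_Ioi (a := Y),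
      setIntegral_union (Set.Iic_disjoint_Ioi le_rfl) measurableSet_Ioi
        hfφ.integrableOn hfφ.integrableOn]
  calc ‖∫ y : ℝ, f y * Complex.exp (Complex.I * ((k * xC y : ℝ) : ℂ))‖
      = ‖(∫ y in Set.Iic Y, f y * φ y) + ∫ y in Set.Ioi Y, f y * φ y‖ := by
        rw [← hsplitint]
    _ ≤ ‖∫ y in Set.Iic Y, f y * φ y‖ + ‖∫ y in Set.Ioi Y, f y * φ y‖ := norm_add_le _ _
    _ ≤ (1 + Real.exp Y) * (C + S) / k + C * (Y ^ (-α) / α) := add_le_add hIic2 htail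

lemma integrableOn_log_tail {α K : ℝ} (hα : 1/2 < α) (hK : Real.exp 1 ≤ K) :
    IntegrableOn (fun x : ℝ => Real.log x ^ (-(2*α)) * x⁻¹) (Set.Ioi K) := by
  have hK0 : (0:ℝ) < K := lt_of_lt_of_le (Real.exp_pos 1) hK
  have hlogK : (1:ℝ) ≤ Real.log K := by
    have := Real.log_le_log (Real.exp_pos 1) hK
    rwa [Real.log_exp] at this
  have hne : (1:ℝ) - 2*α ≠ 0 := by intro h; linarith
  set F : ℝ → ℝ := fun x => (1 - 2*α)⁻¹ * Real.log x ^ (1 - 2*α) with hF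
  have hderiv : ∀ x ∈ Set.Ici K, HasDerivAt F (Real.log x ^ (-(2*α)) * x⁻¹) x := by
    intro x hx
    have hx0 : (0:ℝ) < x := lt_of_lt_of_le hK0 hx
    have hlogx : (1:ℝ) ≤ Real.log x := by
      refine hlogK.trans ?_
      exact Real.log_le_log hK0 hx
    have h1 : HasDerivAt Real.log x⁻¹ x := Real.hasDerivAt_log hx0.ne'
    have h2 : HasDerivAt (fun u : ℝ => u ^ (1 - 2*α))
        ((1 - 2*α) * Real.log x ^ (1 - 2*α - 1)) (Real.log x) :=
      Real.hasDerivAt_rpow_const (Or.inl (by linarith))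
    have h3 := (h2.comp x h1).const_mul ((1 - 2*α)⁻¹)
    refine h3.congr_deriv ?_
    rw [show (1 - 2*α - 1) = -(2*α) by ring]
    field_simp
  have hpos : ∀ x ∈ Set.Ioi K, 0 ≤ Real.log x ^ (-(2*α)) * x⁻¹ := by
    intro x hx
    have hx0 : (0:ℝ) < x := lt_of_lt_of_le hK0 (le_of_lt hx)
    have : (0:ℝ) < Real.log x := by
      have := Real.log_le_log hK0 (le_of_lt hx)
      linarith [hlogK]
    positivity
  have htends : Tendsto F atTop (𝓝 ((1 - 2*α)⁻¹ * 0)) := by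
    apply Tendsto.const_mul
    have h1 : Tendsto (fun u : ℝ => u ^ (-(2*α - 1))) atTop (𝓝 0) :=
      tendsto_rpow_neg_atTop (by linarith)
    have h2 := h1.comp Real.tendsto_log_atTop
    simpa [Function.comp_def, show -(2*α - 1) = 1 - 2*α by ring] using h2
  exact integrableOn_Ioi_deriv_of_nonneg ((hderiv K Set.self_mem_Ici).continuousAt.continuousWithinAt)
    (fun x hx => hderiv x (Set.mem_Ici.2 (le_of_lt hx))) hpos htends

lemma rpow_sq' {k : ℝ} (hk : 0 < k) (p : ℝ) : (k ^ p) ^ 2 = k ^ (2 * p) := by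
  rw [sq, ← Real.rpow_add hk, two_mul]

lemma xC_abs_le (y : ℝ) : |xC y| ≤ 1 + |y| := by
  have h1 : (1:ℝ) ≤ 1 + Real.exp (-y) := by linarith [Real.exp_pos (-y)]
  have hlog0 : 0 ≤ Real.log (1 + Real.exp (-y)) := Real.log_nonneg h1
  rw [xC, abs_neg, abs_of_nonneg hlog0]
  have hlog2 : Real.log 2 ≤ 1 := by
    have := Real.log_le_sub_one_of_pos (by norm_num : (0:ℝ) < 2)
    linarith
  rcases le_or_gt 0 y with hy | hy
  · have : Real.exp (-y) ≤ 1 := Real.exp_le_one_iff.2 (by linarith)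
    have h2 : Real.log (1 + Real.exp (-y)) ≤ Real.log 2 :=
      Real.log_le_log (by positivity) (by linarith)
    have : 0 ≤ |y| := abs_nonneg y
    linarith
  · have h2 : (1:ℝ) ≤ Real.exp (-y) := by rw [← Real.exp_zero]; exact Real.exp_le_exp.2 (by linarith)
    have h3 : 1 + Real.exp (-y) ≤ 2 * Real.exp (-y) := by linarith
    have h4 : Real.log (1 + Real.exp (-y)) ≤ Real.log (2 * Real.exp (-y)) :=
      Real.log_le_log (by positivity) h3
    rw [Real.log_mul (by norm_num) (Real.exp_ne_zero _), Real.log_exp] at h4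
    rw [abs_of_neg hy]
    linarith

lemma lintegral_ofReal_lt_top_of_integrableOn {s : Set ℝ} {g : ℝ → ℝ}
    (hg : IntegrableOn g s) : ∫⁻ x in s, ENNReal.ofReal (g x) < ⊤ :=
  lt_of_le_of_lt (lintegral_ofReal_le_lintegral_enorm g) hg.2

set_option maxHeartbeats 1000000 in
/-- convergence of the mean number of created particles
(Theorem `th:convN**` of the paper). -/
theorem stmt_0 (f : ℝ → ℂ) (hf : Integrable f)
    (hdiff : Differentiable ℝ f) (hf' : Integrable (deriv f))
    (hsupp : ∀ p < (0:ℝ), FT f p = 0)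
    (hnorm : (∫⁻ p in Set.Ioi (0:ℝ), ENNReal.ofReal (‖FT f p‖ ^ 2 / (2 * p))) = 1)
    (C L α ε : ℝ) (hC : 0 < C) (hL : 1 < L) (hα : 1/2 < α) (hε : 0 < ε)
    (hleft : ∀ y : ℝ, y ≤ -L → ‖f y‖ ≤ C / (-y) ^ (1 + ε))
    (hright : ∀ y : ℝ, L ≤ y → ‖f y‖ ≤ C / y ^ (1 + α)) :
    Nbar f < ⊤ ∧ (1/2 < ε → NTh f < ⊤) := by
  have hπ : (0:ℝ) < π := Real.pi_pos
  have hπ3 : (3:ℝ) < π := by linarith [Real.pi_gt_three]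
  have hzero : ∫ y : ℝ, f y = 0 := integral_eq_zero_of_FT hf hsupp
  have hsqrt1 : (1:ℝ) ≤ Real.sqrt (2 * π) := by
    rw [show (1:ℝ) = Real.sqrt 1 by simp]
    exact Real.sqrt_le_sqrt (by linarith)
  have hsqrt : ‖((Real.sqrt (2 * π) : ℝ) : ℂ)⁻¹‖ ≤ 1 := by
    rw [norm_inv, Complex.norm_real, Real.norm_eq_abs, abs_of_pos (by linarith)]
    exact inv_le_one_of_one_le₀ hsqrt1
  set S : ℝ := (∫ y : ℝ, ‖deriv f y‖) + ∫ y : ℝ, ‖f y‖ with hSdef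
  have hS0 : 0 ≤ S := by
    rw [hSdef]
    have h1 : 0 ≤ ∫ y : ℝ, ‖deriv f y‖ := integral_nonneg fun y => norm_nonneg _
    have h2 : 0 ≤ ∫ y : ℝ, ‖f y‖ := integral_nonneg fun y => norm_nonneg _
    linarith
  -- generic small-k machinery
  have smallbound : ∀ δ : ℝ, 0 < δ → δ ≤ 1 → δ < ε → δ < α →
      (∀ k : ℝ, 0 < k →
        ‖FcheckX xC f k‖ ≤ (2 * ∫ y : ℝ, ‖f y‖ * (1 + |y|) ^ δ) * k ^ δ ∧
        ‖FT f k‖ ≤ (2 * ∫ y : ℝ, ‖f y‖ * (1 + |y|) ^ δ) * k ^ δ) := by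
    intro δ hδ0 hδ1 hδε hδα k hk
    have hI := integrable_weight hf hC hL hleft hright hδ0 hδε hδα
    constructor
    · have hb := holder_bound hf hzero hδ0 hδ1 hI continuous_xC.measurable xC_abs_le hk
      rw [FcheckX, norm_mul]
      have heq : (fun y : ℝ => f y * Complex.exp (Complex.I * (k : ℂ) * ((xC y : ℝ) : ℂ)))
          = fun y => f y * Complex.exp (Complex.I * ((k * xC y : ℝ) : ℂ)) := by
        funext y; push_cast; ring_nf
      rw [heq]
      calc ‖((Real.sqrt (2 * π) : ℝ) : ℂ)⁻¹‖ * ‖∫ y : ℝ, f y * Complex.exp (Complex.I * ((k * xC y : ℝ) : ℂ))‖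
          ≤ 1 * ((2 * ∫ y : ℝ, ‖f y‖ * (1 + |y|) ^ δ) * k ^ δ) :=
            mul_le_mul hsqrt hb (norm_nonneg _) zero_le_one
        _ = (2 * ∫ y : ℝ, ‖f y‖ * (1 + |y|) ^ δ) * k ^ δ := one_mul _
    · have hb := holder_bound hf hzero hδ0 hδ1 hI (measurable_neg : Measurable fun y : ℝ => -y)
        (fun y => by rw [abs_neg]; linarith [abs_nonneg y]) hk
      rw [FT, norm_mul]
      have heq : (fun y : ℝ => f y * Complex.exp (-(Complex.I * (k : ℂ) * ((y : ℝ) : ℂ))))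
          = fun y => f y * Complex.exp (Complex.I * ((k * (-y) : ℝ) : ℂ)) := by
        funext y; push_cast; ring_nf
      rw [heq]
      calc ‖((Real.sqrt (2 * π) : ℝ) : ℂ)⁻¹‖ * ‖∫ y : ℝ, f y * Complex.exp (Complex.I * ((k * (-y) : ℝ) : ℂ))‖
          ≤ 1 * ((2 * ∫ y : ℝ, ‖f y‖ * (1 + |y|) ^ δ) * k ^ δ) :=
            mul_le_mul hsqrt hb (norm_nonneg _) zero_le_one
        _ = _ := one_mul _
  -- the constants for the small-k bound for Nbar
  set m : ℝ := min ε (min α 1) with hmdef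
  have hm0 : 0 < m := lt_min hε (lt_min (by linarith) one_pos)
  set δ : ℝ := m / 2 with hδdef
  have hδ0 : 0 < δ := by positivity
  have hδ1 : δ ≤ 1 := by
    have h1 : m ≤ 1 := le_trans (min_le_right _ _) (min_le_right _ _)
    rw [hδdef]; linarith
  have hδε : δ < ε := by
    have h1 : m ≤ ε := min_le_left _ _
    rw [hδdef]; linarith
  have hδα : δ < α := by
    have h1 : m ≤ α := le_trans (min_le_right _ _) (min_le_left _ _)
    rw [hδdef]; linarith
  set A : ℝ := 2 * ∫ y : ℝ, ‖f y‖ * (1 + |y|) ^ δ with hAdef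
  have hA0 : 0 ≤ A := by
    rw [hAdef]
    have : 0 ≤ ∫ y : ℝ, ‖f y‖ * (1 + |y|) ^ δ :=
      integral_nonneg fun y => by positivity
    linarith
  have hsmall : ∀ k : ℝ, 0 < k → ‖FcheckX xC f k‖ ≤ A * k ^ δ := fun k hk =>
    (smallbound δ hδ0 hδ1 hδε hδα k hk).1
  -- large-k bound
  set K₀ : ℝ := Real.exp (2 * L) with hK₀def
  have hK₀0 : 0 < K₀ := Real.exp_pos _
  have hK₀1 : 2 * L + 1 ≤ K₀ := by
    rw [hK₀def]; exact Real.add_one_le_exp _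
  set B₁ : ℝ := 2 * (C + S) with hB₁def
  set B₂ : ℝ := C * (2:ℝ) ^ α / α with hB₂def
  have hB₁0 : 0 ≤ B₁ := by rw [hB₁def]; linarith
  have hB₂0 : 0 ≤ B₂ := by rw [hB₂def]; positivity
  have hlarge : ∀ k : ℝ, K₀ < k →
      ‖FcheckX xC f k‖ ≤ B₁ * k ^ (-(1/2) : ℝ) + B₂ * (Real.log k) ^ (-α) := by
    intro k hk
    have hk0 : (0:ℝ) < k := lt_trans hK₀0 hk
    have hk1 : (1:ℝ) ≤ k := by nlinarith
    have hlogk : 2 * L ≤ Real.log k := by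
      have h1 := Real.log_le_log hK₀0 hk.le
      rwa [hK₀def, Real.log_exp] at h1
    have hlog0 : (0:ℝ) < Real.log k := by linarith
    set Y : ℝ := Real.log k / 2 with hYdef
    have hY : L ≤ Y := by rw [hYdef]; linarith
    have hEY : Real.exp Y = k ^ ((1:ℝ)/2) := by
      rw [Real.rpow_def_of_pos hk0, hYdef]
      congr 1; ring
    have hbnd := ibp_bound hf hdiff hf' hC hL (by linarith : (0:ℝ) < α) hright hk0 hY
    have hF : ‖FcheckX xC f k‖
        ≤ (1 + Real.exp Y) * (C + S) / k + C * (Y ^ (-α) / α) := by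
      rw [FcheckX, norm_mul]
      have heq : (fun y : ℝ => f y * Complex.exp (Complex.I * (k : ℂ) * ((xC y : ℝ) : ℂ)))
          = fun y => f y * Complex.exp (Complex.I * ((k * xC y : ℝ) : ℂ)) := by
        funext y; push_cast; ring_nf
      rw [heq]
      have hrhs0 : 0 ≤ (1 + Real.exp Y) * (C + S) / k + C * (Y ^ (-α) / α) := by
        have h0 : (0:ℝ) < Y := by linarith
        positivity
      calc ‖((Real.sqrt (2 * π) : ℝ) : ℂ)⁻¹‖ * ‖∫ y : ℝ, f y * Complex.exp (Complex.I * ((k * xC y : ℝ) : ℂ))‖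
          ≤ 1 * ((1 + Real.exp Y) * (C + S) / k + C * (Y ^ (-α) / α)) :=
            mul_le_mul hsqrt hbnd (norm_nonneg _) zero_le_one
        _ = _ := one_mul _
    have h12 : (1:ℝ) ≤ k ^ ((1:ℝ)/2) := Real.one_le_rpow hk1 (by norm_num)
    have hterm1 : (1 + Real.exp Y) * (C + S) / k ≤ B₁ * k ^ (-(1/2) : ℝ) := by
      have h1 : 1 + Real.exp Y ≤ 2 * k ^ ((1:ℝ)/2) := by rw [hEY]; linarith
      have h2 : (1 + Real.exp Y) * (C + S) ≤ 2 * k ^ ((1:ℝ)/2) * (C + S) :=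
        mul_le_mul_of_nonneg_right h1 (by linarith)
      have h3 : (1 + Real.exp Y) * (C + S) / k ≤ 2 * k ^ ((1:ℝ)/2) * (C + S) / k := by
        gcongr
      refine h3.trans (le_of_eq ?_)
      have h4 : k ^ ((1:ℝ)/2) / k = k ^ (-(1/2) : ℝ) := by
        rw [show k ^ (-(1/2) : ℝ) = k ^ ((1:ℝ)/2 - 1) by norm_num,
          Real.rpow_sub hk0, Real.rpow_one]
      rw [hB₁def, ← h4]
      ring
    have hterm2 : C * (Y ^ (-α) / α) = B₂ * (Real.log k) ^ (-α) := by
      have h5 : Y ^ (-α) = (Real.log k) ^ (-α) * (2:ℝ) ^ α := by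
        rw [hYdef, Real.div_rpow hlog0.le (by norm_num : (0:ℝ) ≤ 2),
          Real.rpow_neg (by norm_num : (0:ℝ) ≤ 2), div_eq_mul_inv, inv_inv]
      rw [h5, hB₂def]
      ring
    calc ‖FcheckX xC f k‖ ≤ (1 + Real.exp Y) * (C + S) / k + C * (Y ^ (-α) / α) := hF
      _ ≤ B₁ * k ^ (-(1/2) : ℝ) + B₂ * (Real.log k) ^ (-α) := by
          rw [hterm2] at *
          linarith
  constructor
  · -- Nbar finite
    rw [Nbar, ← Set.Ioc_union_Ioi_eq_Ioi hK₀0.le,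
      lintegral_union measurableSet_Ioi (Set.Ioc_disjoint_Ioi le_rfl)]
    have piece1 : (∫⁻ k in Set.Ioc (0:ℝ) K₀,
        ENNReal.ofReal (‖FcheckX xC f k‖ ^ 2 / (2 * k))) < ⊤ := by
      have hmono : ∀ k ∈ Set.Ioc (0:ℝ) K₀,
          ENNReal.ofReal (‖FcheckX xC f k‖ ^ 2 / (2 * k))
            ≤ ENNReal.ofReal ((A ^ 2 / 2) * k ^ (2 * δ - 1)) := by
        intro k hk
        obtain ⟨hk0, hkK⟩ := hk
        apply ENNReal.ofReal_le_ofReal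
        have h1 : ‖FcheckX xC f k‖ ^ 2 ≤ (A * k ^ δ) ^ 2 :=
          pow_le_pow_left₀ (norm_nonneg _) (hsmall k hk0) 2
        have h2 : (A * k ^ δ) ^ 2 = A ^ 2 * k ^ (2 * δ) := by
          rw [mul_pow, rpow_sq' hk0]
        have h3 : A ^ 2 * k ^ (2 * δ) / (2 * k) = (A ^ 2 / 2) * k ^ (2 * δ - 1) := by
          rw [Real.rpow_sub hk0, Real.rpow_one]
          field_simp
        calc ‖FcheckX xC f k‖ ^ 2 / (2 * k) ≤ (A * k ^ δ) ^ 2 / (2 * k) := by gcongr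
          _ = (A ^ 2 / 2) * k ^ (2 * δ - 1) := by rw [h2, h3]
      calc (∫⁻ k in Set.Ioc (0:ℝ) K₀, ENNReal.ofReal (‖FcheckX xC f k‖ ^ 2 / (2 * k)))
          ≤ ∫⁻ k in Set.Ioc (0:ℝ) K₀, ENNReal.ofReal ((A ^ 2 / 2) * k ^ (2 * δ - 1)) :=
            setLIntegral_mono' measurableSet_Ioc hmono
        _ < ⊤ := by
            apply lintegral_ofReal_lt_top_of_integrableOn
            have h1 : IntegrableOn (fun k : ℝ => k ^ (2 * δ - 1)) (Set.Ioc (0:ℝ) K₀) := by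
              refine IntegrableOn.mono_set ?_ (Set.Ioc_subset_Ioo_right (lt_add_one K₀))
              exact (intervalIntegral.integrableOn_Ioo_rpow_iff (by linarith)).2 (by linarith)
            exact h1.const_mul _
    have piece2 : (∫⁻ k in Set.Ioi K₀,
        ENNReal.ofReal (‖FcheckX xC f k‖ ^ 2 / (2 * k))) < ⊤ := by
      have hmono : ∀ k ∈ Set.Ioi K₀,
          ENNReal.ofReal (‖FcheckX xC f k‖ ^ 2 / (2 * k))
            ≤ ENNReal.ofReal (B₁ ^ 2 * k ^ (-2 : ℝ)
                + B₂ ^ 2 * ((Real.log k) ^ (-(2*α)) * k⁻¹)) := by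
        intro k hk
        have hk0 : (0:ℝ) < k := lt_trans hK₀0 hk
        have hlogk : 2 * L ≤ Real.log k := by
          have h1 := Real.log_le_log hK₀0 (le_of_lt hk)
          rwa [hK₀def, Real.log_exp] at h1
        have hlog0 : (0:ℝ) < Real.log k := by linarith
        apply ENNReal.ofReal_le_ofReal
        set a : ℝ := B₁ * k ^ (-(1/2) : ℝ) with hadef
        set b : ℝ := B₂ * (Real.log k) ^ (-α) with hbdef
        have ha0 : 0 ≤ a := by rw [hadef]; positivity
        have hb0 : 0 ≤ b := by rw [hbdef]; positivity
        have h1 : ‖FcheckX xC f k‖ ^ 2 ≤ (a + b) ^ 2 :=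
          pow_le_pow_left₀ (norm_nonneg _) (hlarge k hk) 2
        have h2 : (a + b) ^ 2 ≤ 2 * a ^ 2 + 2 * b ^ 2 := by nlinarith [sq_nonneg (a - b)]
        have h3 : a ^ 2 = B₁ ^ 2 * k ^ (-1 : ℝ) := by
          rw [hadef, mul_pow, rpow_sq' hk0]
          norm_num
        have h4 : b ^ 2 = B₂ ^ 2 * (Real.log k) ^ (-(2*α)) := by
          rw [hbdef, mul_pow, rpow_sq' hlog0]
          ring_nf
        have h5 : (2 * a ^ 2 + 2 * b ^ 2) / (2 * k)
            = B₁ ^ 2 * (k ^ (-1 : ℝ) * k⁻¹) + B₂ ^ 2 * ((Real.log k) ^ (-(2*α)) * k⁻¹) := by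
          rw [h3, h4]
          field_simp
        have h6 : k ^ (-1 : ℝ) * k⁻¹ = k ^ (-2 : ℝ) := by
          rw [← Real.rpow_neg_one k, ← Real.rpow_add hk0]
          norm_num
        calc ‖FcheckX xC f k‖ ^ 2 / (2 * k) ≤ (2 * a ^ 2 + 2 * b ^ 2) / (2 * k) := by
              have := le_trans h1 h2
              gcongr
          _ = B₁ ^ 2 * k ^ (-2 : ℝ) + B₂ ^ 2 * ((Real.log k) ^ (-(2*α)) * k⁻¹) := by
              rw [h5, h6]
      calc (∫⁻ k in Set.Ioi K₀, ENNReal.ofReal (‖FcheckX xC f k‖ ^ 2 / (2 * k)))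
          ≤ ∫⁻ k in Set.Ioi K₀, ENNReal.ofReal (B₁ ^ 2 * k ^ (-2 : ℝ)
              + B₂ ^ 2 * ((Real.log k) ^ (-(2*α)) * k⁻¹)) :=
            setLIntegral_mono' measurableSet_Ioi hmono
        _ < ⊤ := by
            apply lintegral_ofReal_lt_top_of_integrableOn
            refine Integrable.add ?_ ?_
            · exact (integrableOn_Ioi_rpow_of_lt (by norm_num) hK₀0).const_mul _
            · refine (integrableOn_log_tail hα ?_).const_mul _
              rw [hK₀def]
              exact Real.exp_le_exp.2 (by linarith)
    exact ENNReal.add_lt_top.2 ⟨piece1, piece2⟩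
  · -- NTh finite
    intro hε2
    set m' : ℝ := min ε α with hm'def
    have hm'12 : 1/2 < m' := lt_min hε2 hα
    set δ' : ℝ := min ((1/2 + m')/2) 1 with hδ'def
    have hδ'0 : 0 < δ' := lt_min (by linarith) one_pos
    have hδ'1 : δ' ≤ 1 := min_le_right _ _
    have hδ'12 : 1/2 < δ' := lt_min (by linarith) (by norm_num)
    have hδ'ε : δ' < ε := by
      have h1 : m' ≤ ε := min_le_left _ _
      rcases le_or_gt ((1/2 + m')/2) 1 with h | h
      · have h2 : δ' = (1/2 + m')/2 := min_eq_left h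
        rw [h2]; linarith
      · have h2 : δ' = 1 := min_eq_right h.le
        rw [h2]; linarith
    have hδ'α : δ' < α := by
      have h1 : m' ≤ α := min_le_right _ _
      rcases le_or_gt ((1/2 + m')/2) 1 with h | h
      · have h2 : δ' = (1/2 + m')/2 := min_eq_left h
        rw [h2]; linarith
      · have h2 : δ' = 1 := min_eq_right h.le
        rw [h2]; linarith
    set A' : ℝ := 2 * ∫ y : ℝ, ‖f y‖ * (1 + |y|) ^ δ' with hA'def
    have hA'0 : 0 ≤ A' := by
      rw [hA'def]
      have : 0 ≤ ∫ y : ℝ, ‖f y‖ * (1 + |y|) ^ δ' :=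
        integral_nonneg fun y => by positivity
      linarith
    have hFTsmall : ∀ p : ℝ, 0 < p → ‖FT f p‖ ≤ A' * p ^ δ' := fun p hp =>
      (smallbound δ' hδ'0 hδ'1 hδ'ε hδ'α p hp).2
    set M : ℝ := ∫ y : ℝ, ‖f y‖ with hMdef
    have hM0 : 0 ≤ M := integral_nonneg fun y => norm_nonneg _
    have hFTM : ∀ p : ℝ, ‖FT f p‖ ≤ M := by
      intro p
      rw [FT, norm_mul]
      have h2 : (fun y : ℝ => ‖f y * Complex.exp (-(Complex.I * (p:ℂ) * (y:ℂ)))‖)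
          = fun y : ℝ => ‖f y‖ := by
        funext y
        rw [norm_mul, show Complex.exp (-(Complex.I * (p:ℂ) * (y:ℂ)))
            = Complex.exp (Complex.I * ((-p * y : ℝ) : ℂ)) by push_cast; ring_nf,
          norm_exp_I_mul, mul_one]
      have h1 : ‖∫ y : ℝ, f y * Complex.exp (-(Complex.I * (p:ℂ) * (y:ℂ)))‖ ≤ M := by
        refine le_trans (norm_integral_le_integral_norm _) (le_of_eq ?_)
        rw [hMdef]
        exact congrArg (fun g : ℝ → ℝ => ∫ y : ℝ, g y) h2
      calc ‖((Real.sqrt (2 * π) : ℝ) : ℂ)⁻¹‖ * ‖∫ y : ℝ, f y * Complex.exp (-(Complex.I * (p:ℂ) * (y:ℂ)))‖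
          ≤ 1 * M := mul_le_mul hsqrt h1 (norm_nonneg _) zero_le_one
        _ = M := one_mul _
    rw [NTh, ← Set.Ioc_union_Ioi_eq_Ioi (zero_le_one : (0:ℝ) ≤ 1),
      lintegral_union measurableSet_Ioi (Set.Ioc_disjoint_Ioi le_rfl)]
    have piece1 : (∫⁻ p in Set.Ioc (0:ℝ) 1,
        ENNReal.ofReal (‖FT f p‖ ^ 2 / (2 * p) / (Real.exp (2 * π * p) - 1))) < ⊤ := by
      have hmono : ∀ p ∈ Set.Ioc (0:ℝ) 1,
          ENNReal.ofReal (‖FT f p‖ ^ 2 / (2 * p) / (Real.exp (2 * π * p) - 1))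
            ≤ ENNReal.ofReal ((A' ^ 2 / (4 * π)) * p ^ (2 * δ' - 2)) := by
        intro p hp
        obtain ⟨hp0, hp1⟩ := hp
        apply ENNReal.ofReal_le_ofReal
        have hE : 2 * π * p ≤ Real.exp (2 * π * p) - 1 := by
          linarith [Real.add_one_le_exp (2 * π * p)]
        have hE0 : (0:ℝ) < 2 * π * p := by positivity
        have h1 : ‖FT f p‖ ^ 2 ≤ A' ^ 2 * p ^ (2 * δ') := by
          calc ‖FT f p‖ ^ 2 ≤ (A' * p ^ δ') ^ 2 :=
              pow_le_pow_left₀ (norm_nonneg _) (hFTsmall p hp0) 2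
            _ = A' ^ 2 * p ^ (2 * δ') := by rw [mul_pow, rpow_sq' hp0]
        have h2 : ‖FT f p‖ ^ 2 / (2 * p) ≤ A' ^ 2 * p ^ (2 * δ') / (2 * p) := by gcongr
        have h3 : ‖FT f p‖ ^ 2 / (2 * p) / (Real.exp (2 * π * p) - 1)
            ≤ (A' ^ 2 * p ^ (2 * δ') / (2 * p)) / (2 * π * p) :=
          div_le_div₀ (by positivity) h2 hE0 hE
        refine h3.trans (le_of_eq ?_)
        have hp2 : p ^ (2:ℝ) = p * p := by
          rw [show (2:ℝ) = ((2:ℕ):ℝ) by norm_num, Real.rpow_natCast]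
          ring
        rw [Real.rpow_sub hp0, hp2, div_div,
          show 2 * p * (2 * π * p) = 4 * π * (p * p) by ring, div_mul_div_comm]
      calc (∫⁻ p in Set.Ioc (0:ℝ) 1,
            ENNReal.ofReal (‖FT f p‖ ^ 2 / (2 * p) / (Real.exp (2 * π * p) - 1)))
          ≤ ∫⁻ p in Set.Ioc (0:ℝ) 1, ENNReal.ofReal ((A' ^ 2 / (4 * π)) * p ^ (2 * δ' - 2)) :=
            setLIntegral_mono' measurableSet_Ioc hmono
        _ < ⊤ := by
            apply lintegral_ofReal_lt_top_of_integrableOn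
            have h1 : IntegrableOn (fun p : ℝ => p ^ (2 * δ' - 2)) (Set.Ioc (0:ℝ) 1) := by
              refine IntegrableOn.mono_set ?_ (Set.Ioc_subset_Ioo_right one_lt_two)
              exact (intervalIntegral.integrableOn_Ioo_rpow_iff two_pos).2 (by linarith)
            exact h1.const_mul _
    have piece2 : (∫⁻ p in Set.Ioi (1:ℝ),
        ENNReal.ofReal (‖FT f p‖ ^ 2 / (2 * p) / (Real.exp (2 * π * p) - 1))) < ⊤ := by
      have hmono : ∀ p ∈ Set.Ioi (1:ℝ),
          ENNReal.ofReal (‖FT f p‖ ^ 2 / (2 * p) / (Real.exp (2 * π * p) - 1))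
            ≤ ENNReal.ofReal (M ^ 2 * Real.exp (-(2 * π) * p)) := by
        intro p hp
        have hp1 : (1:ℝ) < p := hp
        have hp0 : (0:ℝ) < p := lt_trans one_pos hp1
        apply ENNReal.ofReal_le_ofReal
        have hEbig : (2:ℝ) ≤ Real.exp (2 * π * p) := by
          have h1 := Real.add_one_le_exp (2 * π * p)
          nlinarith [mul_pos (by linarith : (0:ℝ) < π - 3) (by linarith : (0:ℝ) < p - 1)]
        have hEhalf : Real.exp (2 * π * p) / 2 ≤ Real.exp (2 * π * p) - 1 := by linarith
        have hEhalf0 : (0:ℝ) < Real.exp (2 * π * p) / 2 := by positivity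
        have hnum : ‖FT f p‖ ^ 2 / (2 * p) ≤ M ^ 2 / 2 := by
          have h1 : ‖FT f p‖ ^ 2 ≤ M ^ 2 := pow_le_pow_left₀ (norm_nonneg _) (hFTM p) 2
          calc ‖FT f p‖ ^ 2 / (2 * p) ≤ M ^ 2 / (2 * p) := by gcongr
            _ ≤ M ^ 2 / 2 := by
                apply div_le_div_of_nonneg_left (by positivity) two_pos
                linarith [hp1]
        have h3 : ‖FT f p‖ ^ 2 / (2 * p) / (Real.exp (2 * π * p) - 1)
            ≤ (M ^ 2 / 2) / (Real.exp (2 * π * p) / 2) :=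
          div_le_div₀ (by positivity) hnum hEhalf0 hEhalf
        refine h3.trans (le_of_eq ?_)
        rw [show -(2 * π) * p = -(2 * π * p) by ring, Real.exp_neg]
        have hEne : Real.exp (2 * π * p) ≠ 0 := (Real.exp_pos _).ne'
        field_simp
      calc (∫⁻ p in Set.Ioi (1:ℝ),
            ENNReal.ofReal (‖FT f p‖ ^ 2 / (2 * p) / (Real.exp (2 * π * p) - 1)))
          ≤ ∫⁻ p in Set.Ioi (1:ℝ), ENNReal.ofReal (M ^ 2 * Real.exp (-(2 * π) * p)) :=
            setLIntegral_mono' measurableSet_Ioi hmono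
        _ < ⊤ := by
            apply lintegral_ofReal_lt_top_of_integrableOn
            exact (exp_neg_integrableOn_Ioi 1 (by positivity : (0:ℝ) < 2 * π)).const_mul _
    exact ENNReal.add_lt_top.2 ⟨piece1, piece2⟩

end
end

section
/- Let f: ℝ → ℂ be integrable whose Fourier transform satisfies f̂(p) = 0 for all p < 0, and suppose there are constants C > 0, L ≥ 1 and α > 0 with |f(y)| ≤ C/y^{1+α} for all y ≥ L. Then for every y_o < 0 and every k ≥ 0: √(2π) |F̌_{y_o}(−k)| ≤ k ‖f‖_{L¹} e^{L + y_o/2} + (2C/α) (L − y_o/2)^{−α}, where F̌_{y_o}(−k) = (2π)^{−1/2} ∫_ℝ f(y − y_o) e^{i k x(y)} dy. -/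
open MeasureTheory Real Filter Set Topology ComplexConjugate
open scoped ENNReal NNReal

set_option maxHeartbeats 1000000

noncomputable section

lemma aux_norm_exp_I_sub_one (θ : ℝ) : ‖Complex.exp ((θ:ℂ) * Complex.I) - 1‖ ≤ |θ| := by
  have h : Complex.exp ((θ:ℂ) * Complex.I) - 1
      = ((Real.cos θ - 1 : ℝ) : ℂ) + ((Real.sin θ : ℝ) : ℂ) * Complex.I := by
    rw [Complex.exp_mul_I, ← Complex.ofReal_cos, ← Complex.ofReal_sin]
    push_cast; ring
  rw [h, Complex.norm_add_mul_I]
  have hs : (Real.cos θ - 1) ^ 2 + Real.sin θ ^ 2 = (2 * |Real.sin (θ/2)|) ^ 2 := by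
    have h1 := Real.sin_sq_add_cos_sq θ
    have h2 := Real.sin_sq_eq_half_sub (θ/2)
    have h3 : 2 * (θ/2) = θ := by ring
    rw [h3] at h2
    have h4 : |Real.sin (θ/2)| ^ 2 = Real.sin (θ/2) ^ 2 := sq_abs _
    nlinarith
  rw [hs, Real.sqrt_sq (by positivity)]
  have := Real.abs_sin_le_abs (x := θ/2)
  rw [abs_div] at this
  simp only [abs_two] at this ⊢
  linarith

lemma aux_norm_exp_I_mul (a b : ℝ) : ‖Complex.exp (Complex.I * (a:ℂ) * (b:ℂ))‖ = 1 := by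
  rw [show Complex.I * (a:ℂ) * (b:ℂ) = ((a*b:ℝ):ℂ) * Complex.I by push_cast; ring,
    Complex.norm_exp_ofReal_mul_I]

lemma aux_integrableOn_shift {g : ℝ → ℝ} {a c : ℝ} (h : IntegrableOn g (Ioi (a - c))) :
    IntegrableOn (fun y => g (y - c)) (Ioi a) := by
  rw [← integrable_indicator_iff measurableSet_Ioi]
  have : (Ioi a).indicator (fun y => g (y - c)) =
      fun y => (Ioi (a - c)).indicator g (y - c) := by
    ext y
    by_cases hy : y ∈ Ioi a
    · rw [indicator_of_mem hy, indicator_of_mem (by simpa [mem_Ioi, sub_lt_sub_iff_right] using hy)]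
    · rw [indicator_of_notMem hy, indicator_of_notMem]
      simpa [mem_Ioi, sub_lt_sub_iff_right] using hy
  rw [this]
  exact ((integrable_indicator_iff measurableSet_Ioi).2 h).comp_sub_right c

lemma aux_setIntegral_shift (g : ℝ → ℝ) (a c : ℝ) :
    ∫ y in Ioi a, g (y - c) = ∫ u in Ioi (a - c), g u := by
  rw [← integral_indicator measurableSet_Ioi, ← integral_indicator measurableSet_Ioi]
  have : (Ioi a).indicator (fun y => g (y - c)) =
      fun y => (Ioi (a - c)).indicator g (y - c) := by
    ext y
    by_cases hy : y ∈ Ioi a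
    · rw [indicator_of_mem hy, indicator_of_mem (by simpa [mem_Ioi, sub_lt_sub_iff_right] using hy)]
    · rw [indicator_of_notMem hy, indicator_of_notMem]
      simpa [mem_Ioi, sub_lt_sub_iff_right] using hy
  rw [this, integral_sub_right_eq_self ((Ioi (a - c)).indicator g) c]

/-- part b) of Lemma `l:flat*` of the paper. -/
theorem stmt_12 (f : ℝ → ℂ) (hf : Integrable f)
    (hsupp : ∀ p < (0:ℝ), FT f p = 0)
    (C L α : ℝ) (hC : 0 < C) (hL : 1 ≤ L) (hα : 0 < α)
    (hdecay : ∀ y : ℝ, L ≤ y → ‖f y‖ ≤ C / y ^ (1 + α))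
    (y₀ k : ℝ) (hy₀ : y₀ < 0) (hk : 0 ≤ k) :
    Real.sqrt (2 * π) * ‖FcheckX xC (transl f y₀) k‖ ≤
      k * (∫ y : ℝ, ‖f y‖) * Real.exp (L + y₀ / 2)
        + (2 * C / α) * (L - y₀ / 2) ^ (-α) := by
  set Y : ℝ := L + y₀ / 2 with hYdef
  have hsqrt : (0:ℝ) < Real.sqrt (2*π) := Real.sqrt_pos.2 (by positivity)
  set E1 : ℝ → ℂ := fun y => Complex.exp (Complex.I * (k:ℂ) * ((xC y : ℝ):ℂ)) with hE1def
  set E2 : ℝ → ℂ := fun y => Complex.exp (Complex.I * (k:ℂ) * ((y:ℝ):ℂ)) with hE2def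
  -- LHS rewrite
  have hLHS : Real.sqrt (2*π) * ‖FcheckX xC (transl f y₀) k‖
      = ‖∫ y : ℝ, f (y - y₀) * E1 y‖ := by
    unfold FcheckX transl
    rw [norm_mul, norm_inv, Complex.norm_real, Real.norm_of_nonneg hsqrt.le]
    field_simp
    rfl
  -- continuity of xC
  have hxCcont : Continuous xC := by
    unfold xC
    have h1 : Continuous fun y : ℝ => 1 + Real.exp (-y) := by continuity
    exact (h1.log fun y => by positivity).neg
  -- G and its properties
  set G : ℝ → ℂ := fun p => ∫ u : ℝ, f u * Complex.exp (Complex.I * (p:ℂ) * (u:ℂ)) with hGdef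
  have hGcont : Continuous G := by
    apply continuous_of_dominated (bound := fun u => ‖f u‖)
    · intro p
      exact hf.aestronglyMeasurable.mul
        ((Complex.continuous_exp.comp (by continuity)).aestronglyMeasurable)
    · intro p
      filter_upwards with u
      rw [norm_mul, aux_norm_exp_I_mul, mul_one]
    · exact hf.norm
    · filter_upwards with u
      exact continuous_const.mul (Complex.continuous_exp.comp (by continuity))
  have hGzero : ∀ p ∈ Ioi (0:ℝ), G p = 0 := by
    intro p hp
    have h1 := hsupp (-p) (by simpa using hp)
    unfold FT at h1
    rcases mul_eq_zero.1 h1 with h2 | h2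
    · exfalso
      rw [inv_eq_zero] at h2
      exact_mod_cast hsqrt.ne' (by exact_mod_cast h2)
    · have h3 : G p = ∫ y : ℝ, f y * Complex.exp (-(Complex.I * ((-p : ℝ):ℂ) * (y:ℂ))) := by
        simp only [hGdef]
        apply integral_congr_ae
        filter_upwards with y
        congr 1
        push_cast; ring
      rw [h3, h2]
  have hG0 : G 0 = 0 := by
    have h1 : Tendsto G (𝓝[>] (0:ℝ)) (𝓝 (G 0)) :=
      (hGcont.tendsto 0).mono_left nhdsWithin_le_nhds
    have h2 : Tendsto G (𝓝[>] (0:ℝ)) (𝓝 0) := by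
      apply Tendsto.congr' _ tendsto_const_nhds
      filter_upwards [self_mem_nhdsWithin] with p hp
      exact (hGzero p hp).symm
    exact tendsto_nhds_unique h1 h2
  have hGk : G k = 0 := by
    rcases eq_or_lt_of_le hk with h | h
    · rw [← h]; exact hG0
    · exact hGzero k h
  -- vanishing of plane-wave integral
  have hzero : ∫ y : ℝ, f (y - y₀) * E2 y = 0 := by
    calc ∫ y : ℝ, f (y - y₀) * E2 y
        = ∫ y : ℝ, f (y - y₀) * Complex.exp (Complex.I * (k:ℂ) * ((y - y₀ : ℝ):ℂ))
            * Complex.exp (Complex.I * (k:ℂ) * (y₀:ℂ)) := by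
          apply integral_congr_ae
          filter_upwards with y
          have hexp : Complex.exp (Complex.I * (k:ℂ) * ((y:ℝ):ℂ))
              = Complex.exp (Complex.I * (k:ℂ) * ((y - y₀ : ℝ):ℂ))
                * Complex.exp (Complex.I * (k:ℂ) * ((y₀:ℝ):ℂ)) := by
            rw [← Complex.exp_add]
            congr 1
            push_cast; ring
          simp only [hE2def]
          rw [hexp]
          ring
      _ = ∫ u : ℝ, f u * Complex.exp (Complex.I * (k:ℂ) * (u:ℂ))
            * Complex.exp (Complex.I * (k:ℂ) * (y₀:ℂ)) := by
          simpa using integral_sub_right_eq_self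
            (fun u : ℝ => f u * Complex.exp (Complex.I * (k:ℂ) * (u:ℂ))
              * Complex.exp (Complex.I * (k:ℂ) * (y₀:ℂ))) y₀
      _ = G k * Complex.exp (Complex.I * (k:ℂ) * (y₀:ℂ)) := integral_mul_const _ _
      _ = 0 := by rw [hGk, zero_mul]
  -- integrability
  have hg : Integrable (fun y => f (y - y₀)) := hf.comp_sub_right y₀
  have hE1int : Integrable (fun y => f (y - y₀) * E1 y) := by
    have h1 : Integrable (fun y => E1 y * f (y - y₀)) := by
      apply hg.bdd_mul
      · exact (Complex.continuous_exp.comp (by continuity)).aestronglyMeasurable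
      · exact Filter.Eventually.of_forall fun y => le_of_eq (aux_norm_exp_I_mul k (xC y))
    simpa [mul_comm] using h1
  have hE2int : Integrable (fun y => f (y - y₀) * E2 y) := by
    have h1 : Integrable (fun y => E2 y * f (y - y₀)) := by
      apply hg.bdd_mul
      · exact (Complex.continuous_exp.comp (by continuity)).aestronglyMeasurable
      · exact Filter.Eventually.of_forall fun y => le_of_eq (aux_norm_exp_I_mul k y)
    simpa [mul_comm] using h1
  have hDint : Integrable (fun y => f (y - y₀) * (E1 y - E2 y)) := by
    simpa [mul_sub, Pi.sub_def] using hE1int.sub hE2int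
  -- key identity
  have key : (∫ y : ℝ, f (y - y₀) * E1 y) = ∫ y : ℝ, f (y - y₀) * (E1 y - E2 y) := by
    have : (fun y : ℝ => f (y - y₀) * (E1 y - E2 y))
        = fun y => f (y - y₀) * E1 y - f (y - y₀) * E2 y := funext fun y => by ring
    rw [this, integral_sub hE1int hE2int, hzero, sub_zero]
  -- pointwise bound on Iic Y
  have hxCy : ∀ y : ℝ, xC y = y - Real.log (1 + Real.exp y) := by
    intro y
    unfold xC
    rw [show (1 + Real.exp (-y)) = Real.exp (-y) * (1 + Real.exp y) by
        rw [mul_add, mul_one, ← Real.exp_add]; rw [neg_add_cancel, Real.exp_zero]; ring,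
      Real.log_mul (Real.exp_ne_zero _) (by positivity), Real.log_exp]
    ring
  have hpt1 : ∀ y : ℝ, y ≤ Y → ‖E1 y - E2 y‖ ≤ k * Real.exp Y := by
    intro y hy
    set l : ℝ := Real.log (1 + Real.exp y) with hld
    have hl0 : 0 ≤ l := Real.log_nonneg (by nlinarith [Real.exp_pos y])
    have hle : l ≤ Real.exp y := by
      have := Real.log_le_sub_one_of_pos (show (0:ℝ) < 1 + Real.exp y by positivity)
      simp only [← hld] at this
      linarith
    have hfactor : E1 y - E2 y
        = E2 y * (Complex.exp (((-(k*l) : ℝ):ℂ) * Complex.I) - 1) := by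
      simp only [hE1def, hE2def]
      rw [mul_sub, mul_one, ← Complex.exp_add]
      congr 2
      rw [hxCy y, ← hld]; push_cast; ring
    rw [hfactor, norm_mul, aux_norm_exp_I_mul, one_mul]
    calc ‖Complex.exp (((-(k*l) : ℝ):ℂ) * Complex.I) - 1‖ ≤ |(-(k*l))| :=
          aux_norm_exp_I_sub_one _
      _ = k * l := by rw [abs_neg, abs_of_nonneg (by positivity)]
      _ ≤ k * Real.exp Y := by
          have h1 : Real.exp y ≤ Real.exp Y := Real.exp_le_exp.2 hy
          nlinarith
  -- bound on Iic Y
  have hA : ∫ y in Iic Y, ‖f (y - y₀) * (E1 y - E2 y)‖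
      ≤ k * (∫ y : ℝ, ‖f y‖) * Real.exp Y := by
    have step1 : ∫ y in Iic Y, ‖f (y - y₀) * (E1 y - E2 y)‖
        ≤ ∫ y in Iic Y, ‖f (y - y₀)‖ * (k * Real.exp Y) := by
      apply setIntegral_mono_on hDint.norm.integrableOn
        ((hg.norm.mul_const _).integrableOn) measurableSet_Iic
      intro y hy
      rw [norm_mul]
      exact mul_le_mul_of_nonneg_left (hpt1 y hy) (norm_nonneg _)
    have step2 : ∫ y in Iic Y, ‖f (y - y₀)‖ * (k * Real.exp Y)
        = (∫ y in Iic Y, ‖f (y - y₀)‖) * (k * Real.exp Y) := integral_mul_const _ _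
    have step3 : (∫ y in Iic Y, ‖f (y - y₀)‖) ≤ ∫ y : ℝ, ‖f (y - y₀)‖ :=
      setIntegral_le_integral hg.norm (Filter.Eventually.of_forall fun y => norm_nonneg _)
    have step4 : (∫ y : ℝ, ‖f (y - y₀)‖) = ∫ y : ℝ, ‖f y‖ :=
      integral_sub_right_eq_self (fun y => ‖f y‖) y₀
    have hke : 0 ≤ k * Real.exp Y := by positivity
    calc ∫ y in Iic Y, ‖f (y - y₀) * (E1 y - E2 y)‖
        ≤ ∫ y in Iic Y, ‖f (y - y₀)‖ * (k * Real.exp Y) := step1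
      _ = (∫ y in Iic Y, ‖f (y - y₀)‖) * (k * Real.exp Y) := step2
      _ ≤ (∫ y : ℝ, ‖f y‖) * (k * Real.exp Y) := by
          rw [← step4]; exact mul_le_mul_of_nonneg_right step3 hke
      _ = k * (∫ y : ℝ, ‖f y‖) * Real.exp Y := by ring
  -- bound on Ioi Y
  have hYb : Y - y₀ = L - y₀ / 2 := by rw [hYdef]; ring
  have hYpos : (0:ℝ) < Y - y₀ := by rw [hYb]; linarith
  have hB : ∫ y in Ioi Y, ‖f (y - y₀) * (E1 y - E2 y)‖
      ≤ (2 * C / α) * (L - y₀/2) ^ (-α) := by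
    have hrint : IntegrableOn (fun y : ℝ => 2 * C * (y - y₀) ^ (-(1+α))) (Ioi Y) := by
      exact (aux_integrableOn_shift (g := fun u => u ^ (-(1+α)))
        (integrableOn_Ioi_rpow_of_lt (by linarith) hYpos)).const_mul (2*C)
    have step1 : ∫ y in Ioi Y, ‖f (y - y₀) * (E1 y - E2 y)‖
        ≤ ∫ y in Ioi Y, 2 * C * (y - y₀) ^ (-(1+α)) := by
      apply setIntegral_mono_on hDint.norm.integrableOn hrint measurableSet_Ioi
      intro y hy
      rw [mem_Ioi] at hy
      have hyL : L ≤ y - y₀ := by rw [hYdef] at hy; linarith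
      have hypos : (0:ℝ) < y - y₀ := by linarith
      have h1 : ‖f (y - y₀)‖ ≤ C / (y - y₀) ^ (1+α) := hdecay _ hyL
      have hE : ‖E1 y - E2 y‖ ≤ 2 := by
        calc ‖E1 y - E2 y‖ ≤ ‖E1 y‖ + ‖E2 y‖ := norm_sub_le _ _
          _ = 2 := by rw [hE1def, hE2def]; simp only [aux_norm_exp_I_mul]; norm_num
      rw [norm_mul]
      calc ‖f (y - y₀)‖ * ‖E1 y - E2 y‖ ≤ (C / (y - y₀) ^ (1+α)) * 2 :=
            mul_le_mul h1 hE (norm_nonneg _) (by positivity)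
        _ = 2 * C * (y - y₀) ^ (-(1+α)) := by
            rw [Real.rpow_neg hypos.le, div_eq_mul_inv]; ring
    have step2 : ∫ y in Ioi Y, 2 * C * (y - y₀) ^ (-(1+α))
        = 2 * C * ((Y - y₀) ^ (-α) / α) := by
      rw [MeasureTheory.integral_const_mul, aux_setIntegral_shift (fun u => u ^ (-(1+α))) Y y₀,
        integral_Ioi_rpow_of_lt (by linarith) hYpos]
      rw [show -(1+α) + 1 = -α by ring]
      ring
    calc ∫ y in Ioi Y, ‖f (y - y₀) * (E1 y - E2 y)‖
        ≤ ∫ y in Ioi Y, 2 * C * (y - y₀) ^ (-(1+α)) := step1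
      _ = 2 * C * ((Y - y₀) ^ (-α) / α) := step2
      _ = (2 * C / α) * (L - y₀/2) ^ (-α) := by rw [hYb]; ring
  -- conclude
  rw [hLHS, key]
  calc ‖∫ y : ℝ, f (y - y₀) * (E1 y - E2 y)‖
      ≤ ∫ y : ℝ, ‖f (y - y₀) * (E1 y - E2 y)‖ := norm_integral_le_integral_norm _
    _ = (∫ y in Iic Y, ‖f (y - y₀) * (E1 y - E2 y)‖)
        + ∫ y in Ioi Y, ‖f (y - y₀) * (E1 y - E2 y)‖ :=
        (intervalIntegral.integral_Iic_add_Ioi hDint.norm.integrableOn hDint.norm.integrableOn).symm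
    _ ≤ k * (∫ y : ℝ, ‖f y‖) * Real.exp Y + (2 * C / α) * (L - y₀/2) ^ (-α) :=
        add_le_add hA hB


end
end

section
/- Let g: (0,∞) → ℂ be integrable with ∫₀^∞ g(x) dx = 0, and suppose there are constants C > 0, l > log 2 and ε > 0 with |g(x)| ≤ 2C/(x − log 2)^{1+ε} for all x ≥ l. Then for every k with 0 ≤ k ≤ 1/l: √(2π) |g̃(−k)| ≤ (4C/q(ε)) k^{q(ε)} ( e^{q(ε)} + 1/(2(1 − q(ε))) ) + k (e^l − 1) ‖g‖_{L¹}, where g̃(−k) = (2π)^{−1/2} ∫₀^∞ g(x) e^{ikx} dx and ‖g‖_{L¹} = ∫₀^∞ |g(x)| dx. -/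
open MeasureTheory Real Filter Set Topology ComplexConjugate
open scoped ENNReal NNReal

noncomputable section

/-- Half-line Fourier transform `g̃(-k) = (2π)^{-1/2} ∫₀^∞ g(x) e^{ikx} dx`. -/
def gtilde (g : ℝ → ℂ) (k : ℝ) : ℂ :=
  (Real.sqrt (2 * π) : ℂ)⁻¹ *
    ∫ x in Set.Ioi (0:ℝ), g x * Complex.exp (Complex.I * (k : ℂ) * (x : ℂ))

/-- The function `q` of the paper: `q(ε) = ε` for `0 < ε ≤ 1/2`, `q(ε) = 1/2`
for `ε > 1/2`. -/
def qfun (ε : ℝ) : ℝ := if ε ≤ 1/2 then ε else 1/2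

lemma st17_norm_exp (t : ℝ) : ‖Complex.exp (Complex.I * (t:ℂ))‖ = 1 := by
  rw [mul_comm, Complex.norm_exp_ofReal_mul_I]

lemma st17_sq (t θ c : ℝ) :
    ‖Complex.exp (Complex.I * (t:ℂ)) - (c:ℂ) * Complex.exp (Complex.I * (θ:ℂ))‖ ^ 2
      = 1 + c^2 - 2*c*Real.cos (t - θ) := by
  rw [mul_comm Complex.I (t:ℂ), mul_comm Complex.I (θ:ℂ), Complex.exp_mul_I, Complex.exp_mul_I,
    Complex.sq_norm]
  simp [Complex.normSq_apply, Complex.cos_ofReal_re, Complex.sin_ofReal_re, Real.cos_sub]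
  ring_nf
  nlinarith [Real.sin_sq_add_cos_sq t, Real.sin_sq_add_cos_sq θ]

lemma st17_exp_sub_one_le {t : ℝ} (ht : 0 ≤ t) :
    ‖Complex.exp (Complex.I*(t:ℂ)) - 1‖ ≤ t := by
  have h := st17_sq t 0 1
  simp only [Complex.ofReal_zero, mul_zero, Complex.exp_zero, Complex.ofReal_one, one_mul,
    sub_zero, one_pow] at h
  have hcos := Real.one_sub_sq_div_two_le_cos (x := t)
  nlinarith [norm_nonneg (Complex.exp (Complex.I*(t:ℂ)) - 1)]

lemma st17_arc {θ φ : ℝ} (h0 : 0 ≤ θ) (h1 : θ ≤ 1) (hφ0 : 0 ≤ φ) (hφ : φ ≤ 2*θ) :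
    ‖Complex.exp (Complex.I * (φ:ℂ)) - (Real.cos θ : ℂ) * Complex.exp (Complex.I * (θ:ℂ))‖ ≤ θ := by
  have h := st17_sq φ θ (Real.cos θ)
  have hπ : (3:ℝ) < π := Real.pi_gt_three
  have hcc : Real.cos θ ≤ Real.cos (φ - θ) := by
    rw [← Real.cos_abs (φ - θ)]
    exact Real.cos_le_cos_of_nonneg_of_le_pi (abs_nonneg _) (by linarith)
      (abs_le.2 ⟨by linarith, by linarith⟩)
  have hc0 : 0 ≤ Real.cos θ :=
    Real.cos_nonneg_of_mem_Icc ⟨by linarith, by linarith⟩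
  have hs : Real.sin θ ^ 2 ≤ θ ^ 2 := Real.sin_sq_le_sq
  have hpy := Real.sin_sq_add_cos_sq θ
  nlinarith [norm_nonneg (Complex.exp (Complex.I * (φ:ℂ)) - (Real.cos θ : ℂ) * Complex.exp (Complex.I * (θ:ℂ)))]

lemma st17_indicator_comp_sub (f : ℝ → ℝ) (b d x : ℝ) :
    Set.indicator (Ioi b) (fun y => f (y - d)) x = Set.indicator (Ioi (b - d)) f (x - d) := by
  by_cases h : b < x
  · rw [Set.indicator_of_mem (by exact h),
      Set.indicator_of_mem (by simpa [mem_Ioi, sub_lt_sub_iff_right] using h)]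
  · rw [Set.indicator_of_notMem (by simpa using h),
      Set.indicator_of_notMem (by simpa [mem_Ioi, sub_lt_sub_iff_right] using h)]

lemma st17_integral_Ioi_comp_sub (f : ℝ → ℝ) (b d : ℝ) :
    ∫ x in Ioi b, f (x - d) = ∫ x in Ioi (b - d), f x := by
  rw [← integral_indicator measurableSet_Ioi, ← integral_indicator measurableSet_Ioi]
  rw [show (Set.indicator (Ioi b) fun y => f (y - d)) =
      (fun x => Set.indicator (Ioi (b - d)) f (x - d)) from
    funext fun x => st17_indicator_comp_sub f b d x]
  exact integral_sub_right_eq_self (Set.indicator (Ioi (b - d)) f) d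

lemma st17_integrableOn_Ioi_comp_sub {f : ℝ → ℝ} {c : ℝ} (h : IntegrableOn f (Ioi c)) (d : ℝ) :
    IntegrableOn (fun x => f (x - d)) (Ioi (c + d)) := by
  have h1 : Integrable (Set.indicator (Ioi c) f) :=
    (integrable_indicator_iff measurableSet_Ioi).2 h
  have h2 : Integrable (fun x => Set.indicator (Ioi c) f (x - d)) :=
    h1.comp_sub_right d
  have h3 : (fun x => Set.indicator (Ioi c) f (x - d)) =
      Set.indicator (Ioi (c + d)) (fun x => f (x - d)) := by
    funext x
    rw [st17_indicator_comp_sub (fun y => f y) (c + d) d x]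
    simp
  rw [h3] at h2
  exact (integrable_indicator_iff measurableSet_Ioi).1 h2

set_option maxHeartbeats 1000000 in
/-- Lemma `lemmaA:f*bis` of the paper. -/
theorem stmt_17 (g : ℝ → ℂ) (hg : IntegrableOn g (Set.Ioi 0))
    (hg0 : (∫ x in Set.Ioi (0:ℝ), g x) = 0)
    (C l ε : ℝ) (hC : 0 < C) (hl : Real.log 2 < l) (hε : 0 < ε)
    (hdecay : ∀ x : ℝ, l ≤ x → ‖g x‖ ≤ 2 * C / (x - Real.log 2) ^ (1 + ε))
    (k : ℝ) (hk0 : 0 ≤ k) (hk : k ≤ 1 / l) :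
    Real.sqrt (2 * π) * ‖gtilde g k‖ ≤
      (4 * C / qfun ε) * k ^ qfun ε *
          (Real.exp (qfun ε) + 1 / (2 * (1 - qfun ε)))
        + k * (Real.exp l - 1) * (∫ x in Set.Ioi (0:ℝ), ‖g x‖) := by
  have hq_pos : 0 < qfun ε := by unfold qfun; split_ifs <;> [exact hε; norm_num]
  have hq_half : qfun ε ≤ 1/2 := by
    unfold qfun; split_ifs with h; exacts [h, le_refl _]
  have hq_eps : qfun ε ≤ ε := by
    unfold qfun; split_ifs with h; exacts [le_refl _, by push_neg at h; linarith]
  set q : ℝ := qfun ε with hq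
  have hq1 : q < 1 := by linarith
  have h1q : (0:ℝ) < 1 - q := by linarith
  have hlog2 : Real.log 2 < 1 := by
    have := Real.log_two_lt_d9; linarith
  have hlog2pos : (0:ℝ) < Real.log 2 := Real.log_pos (by norm_num)
  set a : ℝ := Real.exp l - 1 with ha
  have ha1 : 1 < a := by
    have h2 : (2:ℝ) < Real.exp l := by
      calc (2:ℝ) = Real.exp (Real.log 2) := (Real.exp_log (by norm_num)).symm
      _ < Real.exp l := Real.exp_lt_exp.2 hl
    rw [ha]; linarith
  have hla : l ≤ a := by
    have := Real.add_one_le_exp l; rw [ha]; linarith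
  clear_value q a
  have hInonneg : 0 ≤ ∫ x in Set.Ioi (0:ℝ), ‖g x‖ :=
    integral_nonneg fun x => norm_nonneg _
  have hkq_nonneg : (0:ℝ) ≤ k ^ q := Real.rpow_nonneg hk0 _
  have hterm1 : 0 ≤ 4 * C / q * k ^ q * (Real.exp q + 1 / (2 * (1 - q))) := by
    apply mul_nonneg (mul_nonneg (div_nonneg (by linarith) hq_pos.le) hkq_nonneg)
    have := Real.exp_pos q
    have : (0:ℝ) ≤ 1 / (2 * (1 - q)) := by positivity
    linarith [Real.exp_pos q]
  have hsqrtpos : (0:ℝ) < Real.sqrt (2*π) := Real.sqrt_pos.2 (by positivity)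
  have hLHS : Real.sqrt (2*π) * ‖gtilde g k‖ =
      ‖∫ x in Set.Ioi (0:ℝ), g x * Complex.exp (Complex.I * (k:ℂ) * (x:ℂ))‖ := by
    unfold gtilde
    rw [norm_mul, norm_inv, Complex.norm_real, Real.norm_eq_abs, abs_of_pos hsqrtpos,
      ← mul_assoc, mul_inv_cancel₀ hsqrtpos.ne', one_mul]
  rw [hLHS]
  rcases hk0.eq_or_lt with hk0' | hkpos
  · -- k = 0
    rw [← hk0']
    simp only [Complex.ofReal_zero, zero_mul, mul_zero, Complex.exp_zero, mul_one]
    rw [hg0, norm_zero, Real.zero_rpow hq_pos.ne']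
    simp
  · by_cases hka : 1 ≤ k * a
    · -- trivial regime
      have h1 : ‖∫ x in Set.Ioi (0:ℝ), g x * Complex.exp (Complex.I * (k:ℂ) * (x:ℂ))‖ ≤
          ∫ x in Set.Ioi (0:ℝ), ‖g x‖ := by
        refine le_trans (norm_integral_le_integral_norm _) (le_of_eq ?_)
        refine integral_congr_ae (Eventually.of_forall fun x => ?_)
        show (‖g x * Complex.exp (Complex.I * (k:ℂ) * (x:ℂ))‖) = ‖g x‖
        rw [norm_mul, show Complex.I * (k:ℂ) * (x:ℂ) = Complex.I * ((k*x : ℝ):ℂ) by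
          push_cast; ring, st17_norm_exp, mul_one]
      have h2 : (∫ x in Set.Ioi (0:ℝ), ‖g x‖) ≤ k * a * ∫ x in Set.Ioi (0:ℝ), ‖g x‖ :=
        le_mul_of_one_le_left hInonneg hka
      linarith
    · push_neg at hka
      have hapos : (0:ℝ) < a := by linarith
      have hθpos : 0 < k * a := mul_pos hkpos hapos
      have hk1 : k < 1 := by nlinarith
      set lam : ℂ := (Real.cos (k*a) : ℂ) * Complex.exp (Complex.I * ((k*a : ℝ):ℂ)) with hlam
      set E : ℝ → ℂ := fun x => Complex.exp (Complex.I * (k:ℂ) * (x:ℂ)) with hE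
      have hEeq : ∀ x : ℝ, E x = Complex.exp (Complex.I * ((k*x : ℝ):ℂ)) := by
        intro x; rw [hE]; push_cast; ring_nf
      have hEnorm : ∀ x : ℝ, ‖E x‖ = 1 := fun x => by rw [hEeq x, st17_norm_exp]
      have hlamnorm : ‖lam‖ ≤ 1 := by
        rw [hlam, norm_mul, st17_norm_exp, mul_one, Complex.norm_real, Real.norm_eq_abs]
        exact Real.abs_cos_le_one _
      -- integrability of g times bounded multipliers
      have hEcont : Continuous E := by
        rw [hE]
        exact Complex.continuous_exp.comp ((continuous_const.mul Complex.continuous_ofReal))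
      have hmul : ∀ (m : ℝ → ℂ), AEStronglyMeasurable m (volume.restrict (Set.Ioi 0)) →
          (∃ B, ∀ x, ‖m x‖ ≤ B) → IntegrableOn (fun x => g x * m x) (Set.Ioi 0) := by
        intro m hm hb
        have h2 := hg.bdd_mul hm (Eventually.of_forall hb.choose_spec)
        have h3 : (fun x => m x * g x) = fun x => g x * m x := funext fun x => mul_comm _ _
        rwa [h3] at h2
      have hint1 : IntegrableOn (fun x => g x * (E x - lam)) (Set.Ioi 0) := by
        refine hmul _ ((hEcont.sub continuous_const).aestronglyMeasurable) ⟨2, fun x => ?_⟩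
        calc ‖E x - lam‖ ≤ ‖E x‖ + ‖lam‖ := norm_sub_le _ _
        _ ≤ 2 := by rw [hEnorm x]; linarith
      have hint2 : IntegrableOn (fun x => g x * lam) (Set.Ioi 0) := hg.mul_const lam
      have hintE : IntegrableOn (fun x => g x * E x) (Set.Ioi 0) := by
        have h3 : (fun x => g x * E x) = fun x => g x * (E x - lam) + g x * lam :=
          funext fun x => by ring
        rw [h3]; exact hint1.add hint2
      have hstep1 : (∫ x in Set.Ioi (0:ℝ), g x * E x)
          = ∫ x in Set.Ioi (0:ℝ), g x * (E x - lam) := by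
        have h3 : (fun x => g x * E x) = fun x => g x * (E x - lam) + g x * lam :=
          funext fun x => by ring
        rw [h3, integral_add hint1 hint2, integral_mul_const, hg0, zero_mul, add_zero]
      have hstep2 : ‖∫ x in Set.Ioi (0:ℝ), g x * (E x - lam)‖ ≤
          ∫ x in Set.Ioi (0:ℝ), ‖g x‖ * ‖E x - lam‖ := by
        refine le_trans (norm_integral_le_integral_norm _) (le_of_eq ?_)
        exact integral_congr_ae (Eventually.of_forall fun x => norm_mul _ _)
      set F : ℝ → ℝ := fun x => ‖g x‖ * ‖E x - lam‖ with hF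
      have hFint : IntegrableOn F (Set.Ioi 0) := by
        have h4 := hint1.norm
        have h5 : (fun x => ‖g x * (E x - lam)‖) = F := funext fun x => norm_mul _ _
        rwa [h5] at h4
      have h2a0 : (0:ℝ) ≤ 2*a := by linarith
      have hsplitF : ∫ x in Set.Ioi (0:ℝ), F x
          = (∫ x in Set.Ioc (0:ℝ) (2*a), F x) + ∫ x in Set.Ioi (2*a), F x := by
        rw [← setIntegral_union (Ioc_disjoint_Ioi le_rfl) measurableSet_Ioi
          (hFint.mono_set Ioc_subset_Ioi_self) (hFint.mono_set (Ioi_subset_Ioi h2a0)),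
          Ioc_union_Ioi_eq_Ioi h2a0]
      -- head estimate
      have hhead : (∫ x in Set.Ioc (0:ℝ) (2*a), F x)
          ≤ (k*a) * ∫ x in Set.Ioi (0:ℝ), ‖g x‖ := by
        have hb : ∀ x ∈ Set.Ioc (0:ℝ) (2*a), F x ≤ (k*a) * ‖g x‖ := by
          intro x hx
          have hxx : ‖E x - lam‖ ≤ k*a := by
            rw [hEeq x, hlam]
            refine st17_arc hθpos.le hka.le (mul_nonneg hk0 hx.1.le) ?_
            calc k*x ≤ k*(2*a) := mul_le_mul_of_nonneg_left hx.2 hk0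
            _ = 2*(k*a) := by ring
          calc F x = ‖g x‖ * ‖E x - lam‖ := rfl
          _ ≤ ‖g x‖ * (k*a) := mul_le_mul_of_nonneg_left hxx (norm_nonneg _)
          _ = (k*a) * ‖g x‖ := mul_comm _ _
        calc (∫ x in Set.Ioc (0:ℝ) (2*a), F x)
            ≤ ∫ x in Set.Ioc (0:ℝ) (2*a), (k*a) * ‖g x‖ :=
              setIntegral_mono_on (hFint.mono_set Ioc_subset_Ioi_self)
                (IntegrableOn.mono_set (hg.norm.const_mul (k*a)) Ioc_subset_Ioi_self)
                measurableSet_Ioc hb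
        _ = (k*a) * ∫ x in Set.Ioc (0:ℝ) (2*a), ‖g x‖ := integral_const_mul _ _
        _ ≤ (k*a) * ∫ x in Set.Ioi (0:ℝ), ‖g x‖ := by
            refine mul_le_mul_of_nonneg_left ?_ hθpos.le
            exact setIntegral_mono_set hg.norm
              (Eventually.of_forall fun x => norm_nonneg _)
              (HasSubset.Subset.eventuallyLE Ioc_subset_Ioi_self)
      -- tail estimate
      set B1 : ℝ := Real.log 2 + 1 with hB1
      set B2 : ℝ := Real.log 2 + 1/k with hB2
      set G : ℝ → ℝ :=
        fun x => 4*C * min 1 (k*(x - Real.log 2)) * (x - Real.log 2) ^ (-(1+q)) with hG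
      have hmaj : IntegrableOn (fun x => (x - Real.log 2) ^ (-(1+q))) (Set.Ioi B1) := by
        have h0 : IntegrableOn (fun s : ℝ => s ^ (-(1+q))) (Set.Ioi (1:ℝ)) :=
          integrableOn_Ioi_rpow_of_lt (by linarith) one_pos
        have h6 := st17_integrableOn_Ioi_comp_sub h0 (Real.log 2)
        rw [show B1 = 1 + Real.log 2 by rw [hB1]; ring]
        exact h6
      have hGcont : ContinuousOn G (Set.Ioi B1) := by
        rw [hG]
        have hmin : Continuous fun x : ℝ => 4*C * min 1 (k*(x - Real.log 2)) :=
          continuous_const.mul (continuous_const.min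
            (continuous_const.mul (continuous_id.sub continuous_const)))
        refine (hmin.continuousOn).mul ?_
        refine ContinuousOn.rpow_const
          ((continuous_id.sub continuous_const).continuousOn) fun x hx => Or.inl ?_
        have hx1 : B1 < x := hx
        rw [hB1] at hx1
        intro hzero
        nlinarith
      have hGnonneg : ∀ x ∈ Set.Ioi B1, 0 ≤ G x := by
        intro x hx
        have hx1 : B1 < x := hx
        have hs0 : (0:ℝ) < x - Real.log 2 := by rw [hB1] at hx1; linarith
        have hmn : 0 ≤ min 1 (k*(x - Real.log 2)) :=
          le_min (by norm_num) (by positivity)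
        rw [hG]
        have := Real.rpow_nonneg hs0.le (-(1+q))
        positivity
      have hGint : IntegrableOn G (Set.Ioi B1) := by
        refine Integrable.mono (hmaj.const_mul (4*C))
          (hGcont.aestronglyMeasurable measurableSet_Ioi) ?_
        refine (ae_restrict_iff' measurableSet_Ioi).2 (Eventually.of_forall fun x hx => ?_)
        have hx1 : B1 < x := hx
        have hs0 : (0:ℝ) < x - Real.log 2 := by rw [hB1] at hx1; linarith
        have hrp : (0:ℝ) ≤ (x - Real.log 2) ^ (-(1+q)) := Real.rpow_nonneg hs0.le _
        rw [Real.norm_eq_abs, Real.norm_eq_abs, abs_of_nonneg (hGnonneg x hx),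
          abs_of_nonneg (by positivity)]
        simp only [hG]
        have hmn : min 1 (k*(x - Real.log 2)) ≤ 1 := min_le_left _ _
        have hmn0 : 0 ≤ min 1 (k*(x - Real.log 2)) := le_min (by norm_num) (by positivity)
        nlinarith [mul_nonneg (mul_nonneg (by linarith : (0:ℝ) ≤ 4*C)
          (sub_nonneg.2 hmn)) hrp]
      have htail1 : (∫ x in Set.Ioi (2*a), F x) ≤ ∫ x in Set.Ioi (2*a), G x := by
        have hsub2a : Set.Ioi (2*a) ⊆ Set.Ioi B1 := by
          apply Ioi_subset_Ioi; rw [hB1]; linarith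
        refine setIntegral_mono_on (hFint.mono_set (Ioi_subset_Ioi h2a0))
          (hGint.mono_set hsub2a) measurableSet_Ioi ?_
        intro x hx
        have hxgt : 2*a < x := hx
        have hs1 : 1 ≤ x - Real.log 2 := by linarith
        have hs0 : (0:ℝ) < x - Real.log 2 := by linarith
        have hxl : l ≤ x := by linarith
        have hgb2 : ‖g x‖ ≤ 2*C*(x - Real.log 2)^(-(1+q)) := by
          have hgb : ‖g x‖ ≤ 2*C*(x - Real.log 2)^(-(1+ε)) := by
            have h7 := hdecay x hxl
            rwa [div_eq_mul_inv, ← Real.rpow_neg (by linarith)] at h7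
          refine le_trans hgb (mul_le_mul_of_nonneg_left ?_ (by linarith))
          exact Real.rpow_le_rpow_of_exponent_le hs1 (by linarith)
        have hEb : ‖E x - lam‖ ≤ 2 * min 1 (k*(x - Real.log 2)) := by
          by_cases hks : 1 ≤ k*(x - Real.log 2)
          · rw [min_eq_left hks]
            calc ‖E x - lam‖ ≤ ‖E x‖ + ‖lam‖ := norm_sub_le _ _
            _ ≤ 2*1 := by rw [hEnorm x]; linarith
          · push_neg at hks
            rw [min_eq_right hks.le]
            have hδ0 : 0 ≤ k*(x - a) := mul_nonneg hk0 (by linarith)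
            have hδs : k*(x-a) ≤ k*(x - Real.log 2) :=
              mul_le_mul_of_nonneg_left (by linarith) hk0
            have key : E x - lam
                = Complex.exp (Complex.I * ((k*a : ℝ):ℂ))
                    * (Complex.exp (Complex.I * ((k*(x-a) : ℝ):ℂ)) - 1)
                  + (Complex.exp (Complex.I * ((k*a : ℝ):ℂ)) - lam) := by
              rw [hlam, hEeq x, show Complex.I * ((k*x:ℝ):ℂ)
                  = Complex.I * ((k*a:ℝ):ℂ) + Complex.I * ((k*(x-a):ℝ):ℂ) by push_cast; ring,
                Complex.exp_add]
              ring
            have hcosb : ‖Complex.exp (Complex.I * ((k*a : ℝ):ℂ)) - lam‖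
                = 1 - Real.cos (k*a) := by
              rw [hlam, show Complex.exp (Complex.I * ((k*a : ℝ):ℂ))
                    - (Real.cos (k*a) : ℂ) * Complex.exp (Complex.I * ((k*a : ℝ):ℂ))
                  = ((1 - Real.cos (k*a) : ℝ) : ℂ) * Complex.exp (Complex.I * ((k*a : ℝ):ℂ)) by
                  push_cast; ring, norm_mul, st17_norm_exp, mul_one, Complex.norm_real,
                Real.norm_eq_abs, abs_of_nonneg (by linarith [Real.cos_le_one (k*a)])]
            have hcos2 : 1 - Real.cos (k*a) ≤ (k*a)^2/2 := by
              have := Real.one_sub_sq_div_two_le_cos (x := k*a); linarith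
            have hθ2 : (k*a)^2 ≤ k*(x-a) := by nlinarith
            calc ‖E x - lam‖
                ≤ ‖Complex.exp (Complex.I * ((k*a : ℝ):ℂ))
                    * (Complex.exp (Complex.I * ((k*(x-a) : ℝ):ℂ)) - 1)‖
                  + ‖Complex.exp (Complex.I * ((k*a : ℝ):ℂ)) - lam‖ := by
                  rw [key]; exact norm_add_le _ _
            _ ≤ k*(x-a) + (1 - Real.cos (k*a)) := by
                rw [norm_mul, st17_norm_exp, one_mul, hcosb]
                exact add_le_add_left (st17_exp_sub_one_le hδ0) _
            _ ≤ 2 * (k*(x - Real.log 2)) := by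
                have h10 : 0 ≤ k*(x - Real.log 2) := mul_nonneg hk0 hs0.le
                linarith
        calc F x = ‖g x‖ * ‖E x - lam‖ := rfl
        _ ≤ (2*C*(x - Real.log 2)^(-(1+q))) * (2 * min 1 (k*(x - Real.log 2))) := by
            refine mul_le_mul hgb2 hEb (norm_nonneg _) ?_
            positivity
        _ = G x := by rw [hG]; ring
      have htail2 : (∫ x in Set.Ioi (2*a), G x) ≤ ∫ x in Set.Ioi B1, G x := by
        refine setIntegral_mono_set hGint
          ((ae_restrict_iff' measurableSet_Ioi).2 (Eventually.of_forall hGnonneg))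
          (HasSubset.Subset.eventuallyLE (Ioi_subset_Ioi ?_))
        rw [hB1]; linarith
      have hB12 : B1 ≤ B2 := by
        rw [hB1, hB2]
        have h8 : 1 ≤ 1/k := by rw [le_div_iff₀ hkpos]; linarith
        linarith
      have hsplitG : (∫ x in Set.Ioi B1, G x)
          = (∫ x in Set.Ioc B1 B2, G x) + ∫ x in Set.Ioi B2, G x := by
        rw [← setIntegral_union (Ioc_disjoint_Ioi le_rfl) measurableSet_Ioi
          (hGint.mono_set Ioc_subset_Ioi_self) (hGint.mono_set (Ioi_subset_Ioi hB12)),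
          Ioc_union_Ioi_eq_Ioi hB12]
      -- piece 1
      have hp1 : (∫ x in Set.Ioc B1 B2, G x) ≤ 4*C*(k^q)/(1-q) := by
        have hb : ∀ x ∈ Set.Ioc B1 B2, G x ≤ 4*C*k*(x - Real.log 2)^(-q) := by
          intro x hx
          have hx1 : B1 < x := hx.1
          have hs0 : (0:ℝ) < x - Real.log 2 := by rw [hB1] at hx1; linarith
          have hmin : min 1 (k*(x - Real.log 2)) ≤ k*(x - Real.log 2) := min_le_right _ _
          have hrw : (x - Real.log 2) * (x - Real.log 2)^(-(1+q)) = (x - Real.log 2)^(-q) := by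
            have h9 := Real.rpow_add hs0 1 (-(1+q))
            rw [Real.rpow_one] at h9
            rw [← h9]; norm_num
          calc G x = 4*C * min 1 (k*(x - Real.log 2)) * (x - Real.log 2)^(-(1+q)) := rfl
          _ ≤ 4*C * (k*(x - Real.log 2)) * (x - Real.log 2)^(-(1+q)) := by
              refine mul_le_mul_of_nonneg_right
                (mul_le_mul_of_nonneg_left hmin (by linarith)) ?_
              exact Real.rpow_nonneg hs0.le _
          _ = 4*C*k*((x - Real.log 2) * (x - Real.log 2)^(-(1+q))) := by ring
          _ = 4*C*k*(x - Real.log 2)^(-q) := by rw [hrw]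
        have hcont : ContinuousOn (fun x : ℝ => 4*C*k*(x - Real.log 2)^(-q))
            (Set.Icc B1 B2) := by
          refine ContinuousOn.mul continuousOn_const ?_
          refine ContinuousOn.rpow_const
            ((continuous_id.sub continuous_const).continuousOn) fun x hx => Or.inl ?_
          have hx1 : B1 ≤ x := hx.1
          rw [hB1] at hx1
          intro hzero; nlinarith
        have hint_1 : IntegrableOn (fun x => 4*C*k*(x - Real.log 2)^(-q)) (Set.Ioc B1 B2) :=
          (hcont.integrableOn_Icc).mono_set Ioc_subset_Icc_self
        calc (∫ x in Set.Ioc B1 B2, G x)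
            ≤ ∫ x in Set.Ioc B1 B2, 4*C*k*(x - Real.log 2)^(-q) :=
              setIntegral_mono_on (hGint.mono_set Ioc_subset_Ioi_self) hint_1
                measurableSet_Ioc hb
        _ = ∫ x in B1..B2, 4*C*k*(x - Real.log 2)^(-q) :=
              (_root_.intervalIntegral.integral_of_le hB12).symm
        _ = 4*C*k * ∫ x in B1..B2, (x - Real.log 2)^(-q) := by
              rw [← _root_.intervalIntegral.integral_const_mul]
        _ = 4*C*k * ∫ s in (B1 - Real.log 2)..(B2 - Real.log 2), s^(-q) := by
              rw [_root_.intervalIntegral.integral_comp_sub_right (fun s => s^(-q)) (Real.log 2)]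
        _ = 4*C*k * ∫ s in (1:ℝ)..(1/k), s^(-q) := by
              rw [hB1, hB2]; ring_nf
        _ = 4*C*k * (((1/k)^(-q+1) - (1:ℝ)^(-q+1))/(-q+1)) := by
              open intervalIntegral in
              rw [integral_rpow (Or.inl (by linarith : (-1:ℝ) < -q))]
        _ ≤ 4*C*(k^q)/(1-q) := by
              have hkq1 : (1/k)^(-q+1) = k^(q-1) := by
                rw [one_div, ← Real.rpow_neg_one k, ← Real.rpow_mul hk0]
                congr 1; ring
              have hkk : k * k^(q-1) = k^q := by
                have h := Real.rpow_add hkpos 1 (q-1)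
                rw [Real.rpow_one] at h
                rw [← h]
                congr 1; ring
              rw [hkq1, Real.one_rpow, show -q+1 = 1-q from by ring]
              rw [show 4*C*k*((k^(q-1) - 1)/(1-q)) = (k*k^(q-1) - k)*(4*C)/(1-q) from by ring,
                hkk]
              rw [div_le_div_iff₀ h1q h1q]
              nlinarith [mul_nonneg (mul_nonneg hk0 (le_of_lt hC)) h1q.le]
      -- piece 2
      have h1k : (0:ℝ) < 1/k := by positivity
      have hp2 : (∫ x in Set.Ioi B2, G x) ≤ 4*C*(k^q)/q := by
        have hmaj2 : IntegrableOn (fun x => (x - Real.log 2) ^ (-(1+q))) (Set.Ioi B2) := by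
          have h0 : IntegrableOn (fun s : ℝ => s ^ (-(1+q))) (Set.Ioi (1/k)) :=
            integrableOn_Ioi_rpow_of_lt (by linarith) h1k
          have h6 := st17_integrableOn_Ioi_comp_sub h0 (Real.log 2)
          rw [show B2 = 1/k + Real.log 2 by rw [hB2]; ring]
          exact h6
        have hb : ∀ x ∈ Set.Ioi B2, G x ≤ 4*C*(x - Real.log 2)^(-(1+q)) := by
          intro x hx
          have hx1 : B2 < x := hx
          have hs0 : (0:ℝ) < x - Real.log 2 := by rw [hB2] at hx1; linarith
          have hmn : min 1 (k*(x - Real.log 2)) ≤ 1 := min_le_left _ _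
          have hrp : (0:ℝ) ≤ (x - Real.log 2)^(-(1+q)) := Real.rpow_nonneg hs0.le _
          simp only [hG]
          nlinarith [mul_nonneg (mul_nonneg (by linarith : (0:ℝ) ≤ 4*C)
            (sub_nonneg.2 hmn)) hrp]
        calc (∫ x in Set.Ioi B2, G x)
            ≤ ∫ x in Set.Ioi B2, 4*C*(x - Real.log 2)^(-(1+q)) :=
              setIntegral_mono_on (hGint.mono_set (Ioi_subset_Ioi hB12))
                (hmaj2.const_mul (4*C)) measurableSet_Ioi hb
        _ = 4*C * ∫ x in Set.Ioi B2, (x - Real.log 2)^(-(1+q)) := integral_const_mul _ _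
        _ = 4*C * ∫ s in Set.Ioi (1/k), s^(-(1+q)) := by
            rw [show (∫ x in Set.Ioi B2, (x - Real.log 2)^(-(1+q)))
                = ∫ s in Set.Ioi (B2 - Real.log 2), s^(-(1+q)) from
              st17_integral_Ioi_comp_sub (fun s => s^(-(1+q))) B2 (Real.log 2)]
            rw [show B2 - Real.log 2 = 1/k by rw [hB2]; ring]
        _ = 4*C * (-(1/k)^(-(1+q)+1)/(-(1+q)+1)) := by
            rw [integral_Ioi_rpow_of_lt (by linarith) h1k]
        _ = 4*C*(k^q)/q := by
            rw [show (-(1+q)+1 : ℝ) = -q by ring]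
            rw [show ((1/k : ℝ))^(-q) = k^q by
              rw [one_div, Real.inv_rpow hk0, Real.rpow_neg hk0, inv_inv]]
            field_simp
      -- assemble
      have hfinal1 : ‖∫ x in Set.Ioi (0:ℝ), g x * E x‖
          ≤ (k*a) * (∫ x in Set.Ioi (0:ℝ), ‖g x‖)
            + (4*C*(k^q)/(1-q) + 4*C*(k^q)/q) := by
        rw [hstep1]
        refine le_trans hstep2 ?_
        calc (∫ x in Set.Ioi (0:ℝ), F x)
            = (∫ x in Set.Ioc (0:ℝ) (2*a), F x) + ∫ x in Set.Ioi (2*a), F x := hsplitF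
        _ ≤ (k*a) * (∫ x in Set.Ioi (0:ℝ), ‖g x‖) + ∫ x in Set.Ioi (2*a), G x :=
            add_le_add hhead htail1
        _ ≤ (k*a) * (∫ x in Set.Ioi (0:ℝ), ‖g x‖) + ∫ x in Set.Ioi B1, G x :=
            add_le_add_right htail2 _
        _ = (k*a) * (∫ x in Set.Ioi (0:ℝ), ‖g x‖)
            + ((∫ x in Set.Ioc B1 B2, G x) + ∫ x in Set.Ioi B2, G x) := by rw [hsplitG]
        _ ≤ (k*a) * (∫ x in Set.Ioi (0:ℝ), ‖g x‖) + (4*C*(k^q)/(1-q) + 4*C*(k^q)/q) :=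
            add_le_add_right (add_le_add hp1 hp2) _
      have harith : 4*C*(k^q)/(1-q) + 4*C*(k^q)/q
          ≤ 4*C/q*(k^q)*(Real.exp q + 1/(2*(1-q))) := by
        have hw : 1/(1-q) = 2*(1/(2*(1-q))) := by field_simp
        have h2v : (2:ℝ) ≤ 1/q := by rw [le_div_iff₀ hq_pos]; linarith
        have hwpos : (0:ℝ) ≤ 1/(2*(1-q)) := by positivity
        have hexp1 : (1:ℝ) ≤ Real.exp q := Real.one_le_exp hq_pos.le
        have key : 1/(1-q) + 1/q ≤ (1/q)*(Real.exp q + 1/(2*(1-q))) := by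
          calc 1/(1-q) + 1/q = 2*(1/(2*(1-q))) + (1/q)*1 := by rw [← hw]; ring
          _ ≤ (1/q)*(1/(2*(1-q))) + (1/q)*Real.exp q :=
              add_le_add (mul_le_mul_of_nonneg_right h2v hwpos)
                (mul_le_mul_of_nonneg_left hexp1 (by positivity))
          _ = (1/q)*(Real.exp q + 1/(2*(1-q))) := by ring
        calc 4*C*(k^q)/(1-q) + 4*C*(k^q)/q = (4*C*(k^q)) * (1/(1-q) + 1/q) := by ring
        _ ≤ (4*C*(k^q)) * ((1/q)*(Real.exp q + 1/(2*(1-q)))) :=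
            mul_le_mul_of_nonneg_left key
              (mul_nonneg (by linarith) hkq_nonneg)
        _ = 4*C/q*(k^q)*(Real.exp q + 1/(2*(1-q))) := by ring
      linarith



end
end

section
/- Let g: (0,∞) → ℂ be integrable and differentiable, and suppose there are constants C_+ > 0, 0 < l < 1 and α > 0 with |g(x)| ≤ C_+/(x (−log x)^{1+α}) for all 0 < x ≤ l. Then for every k ≥ l^{−2}: √(2π) |g̃(−k)| ≤ 2^α C_+/(α (log k)^α) + (1/√k) · 2^{1+α} C_+/(log k)^{1+α} + (1/k) ∫_{1/√k}^∞ |g'(x)| dx, where g̃(−k) = (2π)^{−1/2} ∫₀^∞ g(x) e^{ikx} dx. -/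
open MeasureTheory Real Filter Set Topology ComplexConjugate
open scoped ENNReal NNReal

noncomputable section

/-- Auxiliary: bound for the integral of `‖g‖` near `0`. -/
lemma stmt19_aux_part1 (g : ℝ → ℂ) (hg : IntegrableOn g (Set.Ioi 0))
    (Cp l α : ℝ) (hCp : 0 < Cp) (hα : 0 < α)
    (hdecay : ∀ x : ℝ, 0 < x → x ≤ l → ‖g x‖ ≤ Cp / (x * (-Real.log x) ^ (1 + α)))
    (a : ℝ) (ha0 : 0 < a) (ha1 : a < 1) (hal : a ≤ l) :
    ∫ x in Set.Ioc 0 a, ‖g x‖ ≤ Cp / α * (-Real.log a) ^ (-α) := by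
  set F : ℝ → ℝ := fun x => Cp / α * (-Real.log x) ^ (-α) with hF
  set h : ℝ → ℝ := fun x => Cp / (x * (-Real.log x) ^ (1 + α)) with hh
  have hpos : ∀ x : ℝ, 0 < x → x < 1 → 0 < -Real.log x := by
    intro x hx0 hx1; have := Real.log_neg hx0 hx1; linarith
  have hFd : ∀ x : ℝ, 0 < x → x < 1 → HasDerivAt F (h x) x := by
    intro x hx0 hx1
    have hlx : 0 < -Real.log x := hpos x hx0 hx1
    have d1 : HasDerivAt (fun y : ℝ => -Real.log y) (-x⁻¹) x := (Real.hasDerivAt_log hx0.ne').neg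
    have d2 : HasDerivAt (fun y : ℝ => y ^ (-α)) (-α * (-Real.log x) ^ (-α - 1)) (-Real.log x) :=
      Real.hasDerivAt_rpow_const (Or.inl hlx.ne')
    have d3 := (d2.comp x d1).const_mul (Cp / α)
    refine d3.congr_deriv ?_
    have hne : (-Real.log x) ^ (1 + α) ≠ 0 := (Real.rpow_pos_of_pos hlx _).ne'
    simp only [hh]
    rw [show (-α - 1 : ℝ) = -(1 + α) by ring, Real.rpow_neg hlx.le]
    field_simp
  have hbound : ∀ b : ℝ, 0 < b → b < a → ∫ x in Set.Ioc b a, ‖g x‖ ≤ F a := by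
    intro b hb0 hba
    have hico : ∀ x ∈ Set.Icc b a, 0 < x ∧ x < 1 := fun x hx =>
      ⟨lt_of_lt_of_le hb0 hx.1, lt_of_le_of_lt hx.2 ha1⟩
    have hcont : ContinuousOn h (Set.Icc b a) := by
      intro x hx
      obtain ⟨hx0, hx1⟩ := hico x hx
      have hlx := hpos x hx0 hx1
      have hc : ContinuousAt (fun y : ℝ => y * (-Real.log y) ^ (1 + α)) x :=
        continuousAt_id.mul (((Real.continuousAt_log hx0.ne').neg).rpow_const
          (Or.inl hlx.ne'))
      exact (continuousAt_const.div hc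
        (mul_ne_zero hx0.ne' (Real.rpow_pos_of_pos hlx _).ne')).continuousWithinAt
    have hhint : IntegrableOn h (Set.Ioc b a) :=
      (hcont.integrableOn_Icc).mono_set Set.Ioc_subset_Icc_self
    have hgn : IntegrableOn (fun x => ‖g x‖) (Set.Ioc b a) :=
      IntegrableOn.mono_set hg.norm (fun x hx => lt_trans hb0 hx.1)
    have hgle : ∫ x in Set.Ioc b a, ‖g x‖ ≤ ∫ x in Set.Ioc b a, h x :=
      setIntegral_mono_on hgn hhint measurableSet_Ioc (fun x hx =>
        hdecay x (lt_trans hb0 hx.1) (le_trans hx.2 hal))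
    have hFTC : ∫ x in Set.Ioc b a, h x = F a - F b := by
      rw [← intervalIntegral.integral_of_le hba.le]
      apply intervalIntegral.integral_eq_sub_of_hasDerivAt
      · intro x hx
        rw [Set.uIcc_of_le hba.le] at hx
        exact hFd x (hico x hx).1 (hico x hx).2
      · rw [intervalIntegrable_iff_integrableOn_Ioc_of_le hba.le]; exact hhint
    have hFb : 0 ≤ F b := by
      have := hpos b hb0 (lt_trans hba ha1)
      rw [hF]; positivity
    calc ∫ x in Set.Ioc b a, ‖g x‖ ≤ F a - F b := hgle.trans_eq hFTC
      _ ≤ F a := by linarith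
  set s : ℕ → Set ℝ := fun n => Set.Ioc (a / (n + 2)) a with hs
  have hsm : ∀ n, MeasurableSet (s n) := fun n => measurableSet_Ioc
  have hmono : Monotone s := by
    intro n m hnm
    apply Set.Ioc_subset_Ioc _ le_rfl
    have h2 : ((n:ℝ) + 2) ≤ (m:ℝ) + 2 := by exact_mod_cast Nat.add_le_add_right hnm 2
    gcongr
  have hunion : (⋃ n, s n) = Set.Ioc 0 a := by
    ext x
    simp only [Set.mem_iUnion, Set.mem_Ioc, hs]
    constructor
    · rintro ⟨n, h1, h2⟩
      exact ⟨lt_trans (by positivity) h1, h2⟩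
    · rintro ⟨hx0, hxa⟩
      obtain ⟨n, hn⟩ := exists_nat_gt (a / x)
      refine ⟨n, ?_, hxa⟩
      rw [div_lt_iff₀ (by positivity)]
      rw [div_lt_iff₀ hx0] at hn
      nlinarith [hx0.le]
  have hint0a : IntegrableOn (fun x => ‖g x‖) (Set.Ioc 0 a) :=
    IntegrableOn.mono_set hg.norm (fun x hx => hx.1)
  have htend := tendsto_setIntegral_of_monotone hsm hmono (by rwa [hunion])
  rw [hunion] at htend
  apply le_of_tendsto htend
  filter_upwards [] with n
  apply hbound
  · positivity
  · rw [div_lt_iff₀ (by positivity)]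
    nlinarith [ha0]

/-- Auxiliary: integration by parts bound for the tail integral. -/
lemma stmt19_aux_part2 (g : ℝ → ℂ) (hg : IntegrableOn g (Set.Ioi 0))
    (hdiff : ∀ x : ℝ, 0 < x → DifferentiableAt ℝ g x)
    (a k : ℝ) (ha0 : 0 < a) (hk0 : 0 < k)
    (hI : ∫⁻ x in Set.Ioi a, (‖deriv g x‖₊ : ℝ≥0∞) < ⊤) :
    ‖∫ x in Set.Ioi a, g x * Complex.exp (Complex.I * (k:ℂ) * (x:ℂ))‖ ≤
      ‖g a‖ * k⁻¹ + k⁻¹ * ∫ x in Set.Ioi a, ‖deriv g x‖ := by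
  set c : ℂ := Complex.I * (k:ℂ) with hc_def
  have hc : c ≠ 0 := mul_ne_zero Complex.I_ne_zero (by exact_mod_cast hk0.ne')
  have hnc : ‖c‖ = k := by
    rw [hc_def, norm_mul, Complex.norm_I, one_mul, Complex.norm_real, Real.norm_eq_abs,
      abs_of_pos hk0]
  have hnorm_e : ∀ x : ℝ, ‖Complex.exp (c * (x:ℂ))‖ = 1 := by
    intro x
    rw [show c * (x:ℂ) = ((k*x : ℝ):ℂ) * Complex.I by rw [hc_def]; push_cast; ring]
    exact Complex.norm_exp_ofReal_mul_I _
  have hmeas : Measurable (deriv g) := measurable_deriv g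
  have hg'int : IntegrableOn (deriv g) (Set.Ioi a) :=
    ⟨(hmeas.aestronglyMeasurable).restrict, hI⟩
  have hgint : IntegrableOn g (Set.Ioi a) :=
    IntegrableOn.mono_set hg (Set.Ioi_subset_Ioi ha0.le)
  set v : ℝ → ℂ := fun x => Complex.exp (c * (x:ℂ)) * c⁻¹ with hv_def
  have hnv : ∀ x : ℝ, ‖v x‖ = k⁻¹ := by
    intro x
    rw [hv_def]
    simp only [norm_mul, hnorm_e, one_mul, norm_inv, hnc]
  have hvcont : Continuous v := by
    apply Continuous.mul _ continuous_const
    exact Complex.continuous_exp.comp (continuous_const.mul Complex.continuous_ofReal)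
  have hvd : ∀ x : ℝ, HasDerivAt v (Complex.exp (c * (x:ℂ))) x := by
    intro x
    have h1 : HasDerivAt (fun y : ℝ => c * (y:ℂ)) c x := by
      simpa using (Complex.ofRealCLM.hasDerivAt (x := x)).const_mul c
    have h2 := h1.cexp
    have h3 := h2.mul_const c⁻¹
    refine h3.congr_deriv ?_
    field_simp
  have hu : ∀ x ∈ Set.Ioi a, HasDerivAt g (deriv g x) x :=
    fun x hx => (hdiff x (ha0.trans hx)).hasDerivAt
  have huv' : IntegrableOn (g * fun x : ℝ => Complex.exp (c * (x:ℂ))) (Set.Ioi a) := by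
    have : IntegrableOn (fun x : ℝ => Complex.exp (c * (x:ℂ)) * g x) (Set.Ioi a) :=
      Integrable.bdd_mul hgint
        ((Complex.continuous_exp.comp
          (continuous_const.mul Complex.continuous_ofReal)).aestronglyMeasurable)
        (Filter.Eventually.of_forall fun x => le_of_eq (hnorm_e x))
    apply this.congr
    filter_upwards [] with x using mul_comm _ _
  have hu'v : IntegrableOn (deriv g * v) (Set.Ioi a) := by
    have : IntegrableOn (fun x => v x * deriv g x) (Set.Ioi a) :=
      Integrable.bdd_mul hg'int (hvcont.aestronglyMeasurable)
        (Filter.Eventually.of_forall fun x => le_of_eq (hnv x))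
    apply this.congr
    filter_upwards [] with x using mul_comm _ _
  have hgz : Tendsto g atTop (𝓝 0) :=
    tendsto_zero_of_hasDerivAt_of_integrableOn_Ioi hu hg'int hgint
  have h_infty : Tendsto (g * v) atTop (𝓝 0) := by
    apply squeeze_zero_norm (a := fun x => ‖g x‖ * k⁻¹)
    · intro x
      simp only [Pi.mul_apply, norm_mul, hnv]
      exact le_refl _
    · simpa using hgz.norm.mul_const k⁻¹
  have h_zero : Tendsto (g * v) (𝓝[>] a) (𝓝 (g a * v a)) := by
    have : ContinuousAt (g * v) a :=
      ((hdiff a ha0).continuousAt.mul (hvcont.continuousAt))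
    exact this.tendsto.mono_left nhdsWithin_le_nhds
  have hIBP := integral_Ioi_mul_deriv_eq_deriv_mul hu (fun x _ => hvd x) huv' hu'v h_zero h_infty
  rw [show (∫ x in Set.Ioi a, g x * Complex.exp (c * (x:ℂ)))
      = ∫ x in Set.Ioi a, g x * (fun y : ℝ => Complex.exp (c * (y:ℂ))) x from rfl]
  rw [hIBP]
  have hB : ‖∫ x in Set.Ioi a, deriv g x * v x‖ ≤ k⁻¹ * ∫ x in Set.Ioi a, ‖deriv g x‖ := by
    calc ‖∫ x in Set.Ioi a, deriv g x * v x‖ ≤ ∫ x in Set.Ioi a, ‖deriv g x * v x‖ :=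
          norm_integral_le_integral_norm _
      _ = ∫ x in Set.Ioi a, ‖deriv g x‖ * k⁻¹ := by
          congr 1; funext x; rw [norm_mul, hnv]
      _ = k⁻¹ * ∫ x in Set.Ioi a, ‖deriv g x‖ := by
          rw [integral_mul_const, mul_comm]
  calc ‖0 - g a * v a - ∫ x in Set.Ioi a, deriv g x * v x‖
      ≤ ‖0 - g a * v a‖ + ‖∫ x in Set.Ioi a, deriv g x * v x‖ := norm_sub_le _ _
    _ = ‖g a‖ * k⁻¹ + ‖∫ x in Set.Ioi a, deriv g x * v x‖ := by
        rw [zero_sub, norm_neg, norm_mul, hnv]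
    _ ≤ ‖g a‖ * k⁻¹ + k⁻¹ * ∫ x in Set.Ioi a, ‖deriv g x‖ := by linarith

/-- Lemma `lemmaA:f**bis` of the paper.  The last term
`(1/k) ∫_{1/√k}^∞ |g'(x)| dx` may be infinite, so the inequality is stated
in `[0,∞]`. -/
theorem stmt_19 (g : ℝ → ℂ) (hg : IntegrableOn g (Set.Ioi 0))
    (hdiff : ∀ x : ℝ, 0 < x → DifferentiableAt ℝ g x)
    (Cp l α : ℝ) (hCp : 0 < Cp) (hl0 : 0 < l) (hl1 : l < 1) (hα : 0 < α)
    (hdecay : ∀ x : ℝ, 0 < x → x ≤ l → ‖g x‖ ≤ Cp / (x * (-Real.log x) ^ (1 + α)))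
    (k : ℝ) (hk : (l ^ 2)⁻¹ ≤ k) :
    ENNReal.ofReal (Real.sqrt (2 * π) * ‖gtilde g k‖) ≤
      ENNReal.ofReal ((2:ℝ) ^ α * Cp / (α * (Real.log k) ^ α)
          + (1 / Real.sqrt k) * ((2:ℝ) ^ (1 + α) * Cp / (Real.log k) ^ (1 + α)))
        + ENNReal.ofReal (1 / k) *
          ∫⁻ x in Set.Ioi (1 / Real.sqrt k), (‖deriv g x‖₊ : ℝ≥0∞) := by
  have hl2 : (0:ℝ) < l ^ 2 := by positivity
  have hk1 : (1:ℝ) < k := lt_of_lt_of_le ((one_lt_inv₀ hl2).mpr (by nlinarith)) hk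
  have hk0 : (0:ℝ) < k := by linarith
  have hsk : 1 < Real.sqrt k := by
    rw [show (1:ℝ) = Real.sqrt 1 by simp]
    exact Real.sqrt_lt_sqrt (by norm_num) hk1
  set a := 1 / Real.sqrt k with ha_def
  have ha0 : 0 < a := by positivity
  have ha1 : a < 1 := by rw [ha_def, div_lt_one (by linarith)]; exact hsk
  have hal : a ≤ l := by
    have h1 : l⁻¹ ≤ Real.sqrt k := by
      have := Real.sqrt_le_sqrt hk
      rwa [Real.sqrt_inv, Real.sqrt_sq hl0.le] at this
    rw [ha_def, div_le_iff₀ (by linarith)]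
    calc (1:ℝ) = l * l⁻¹ := (mul_inv_cancel₀ hl0.ne').symm
      _ ≤ l * Real.sqrt k := by gcongr
  have hlogk : 0 < Real.log k := Real.log_pos hk1
  have hloga : -Real.log a = Real.log k / 2 := by
    rw [ha_def, one_div, Real.log_inv, Real.log_sqrt hk0.le, neg_neg]
  have h2π : (0:ℝ) < Real.sqrt (2 * π) := Real.sqrt_pos.mpr (by positivity)
  have hnorm_e : ∀ x : ℝ, ‖Complex.exp (Complex.I * (k:ℂ) * (x:ℂ))‖ = 1 := by
    intro x
    rw [show Complex.I * (k:ℂ) * (x:ℂ) = ((k*x : ℝ):ℂ) * Complex.I by push_cast; ring]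
    exact Complex.norm_exp_ofReal_mul_I _
  set G : ℝ → ℂ := fun x => g x * Complex.exp (Complex.I * (k:ℂ) * (x:ℂ)) with hG
  have hmain : Real.sqrt (2 * π) * ‖gtilde g k‖ = ‖∫ x in Set.Ioi (0:ℝ), G x‖ := by
    rw [gtilde, norm_mul, norm_inv, Complex.norm_real, Real.norm_eq_abs, abs_of_pos h2π]
    field_simp
    rfl
  have hGint : IntegrableOn G (Set.Ioi 0) := by
    have : IntegrableOn (fun x : ℝ => Complex.exp (Complex.I * (k:ℂ) * (x:ℂ)) * g x)
        (Set.Ioi 0) :=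
      Integrable.bdd_mul hg
        ((Complex.continuous_exp.comp
          ((continuous_const.mul Complex.continuous_ofReal))).aestronglyMeasurable)
        (Filter.Eventually.of_forall fun x => le_of_eq (hnorm_e x))
    apply this.congr
    filter_upwards [] with x using mul_comm _ _
  have hsplit : ∫ x in Set.Ioi (0:ℝ), G x
      = (∫ x in Set.Ioc 0 a, G x) + ∫ x in Set.Ioi a, G x := by
    rw [← setIntegral_union (Set.Ioc_disjoint_Ioi le_rfl) measurableSet_Ioi
      (hGint.mono_set (fun x hx => hx.1)) (hGint.mono_set (Set.Ioi_subset_Ioi ha0.le)),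
      Set.Ioc_union_Ioi_eq_Ioi ha0.le]
  set B1 : ℝ := (2:ℝ) ^ α * Cp / (α * (Real.log k) ^ α) with hB1
  set B2 : ℝ := (1 / Real.sqrt k) * ((2:ℝ) ^ (1 + α) * Cp / (Real.log k) ^ (1 + α)) with hB2
  have hB1pos : 0 < B1 := by
    rw [hB1]
    exact div_pos (mul_pos (Real.rpow_pos_of_pos (by norm_num) _) hCp)
      (mul_pos hα (Real.rpow_pos_of_pos hlogk _))
  have hB2pos : 0 < B2 := by
    rw [hB2]
    exact mul_pos (by positivity)
      (div_pos (mul_pos (Real.rpow_pos_of_pos (by norm_num) _) hCp)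
        (Real.rpow_pos_of_pos hlogk _))
  have hpart1 : ‖∫ x in Set.Ioc 0 a, G x‖ ≤ B1 := by
    calc ‖∫ x in Set.Ioc 0 a, G x‖ ≤ ∫ x in Set.Ioc 0 a, ‖G x‖ :=
          norm_integral_le_integral_norm _
      _ = ∫ x in Set.Ioc 0 a, ‖g x‖ := by
          congr 1; funext x; rw [hG]; simp only [norm_mul, hnorm_e, mul_one]
      _ ≤ Cp / α * (-Real.log a) ^ (-α) :=
          stmt19_aux_part1 g hg Cp l α hCp hα hdecay a ha0 ha1 hal
      _ = B1 := by
          rw [hloga, hB1, Real.rpow_neg (by positivity),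
            Real.div_rpow hlogk.le (by norm_num)]
          have h1 : (0:ℝ) < (Real.log k) ^ α := Real.rpow_pos_of_pos hlogk _
          have h2 : (0:ℝ) < (2:ℝ) ^ α := Real.rpow_pos_of_pos (by norm_num) _
          field_simp
  rcases eq_top_or_lt_top (∫⁻ x in Set.Ioi a, (‖deriv g x‖₊ : ℝ≥0∞)) with hItop | hIlt
  · rw [hItop, ENNReal.mul_top (ENNReal.ofReal_pos.mpr (by positivity)).ne']
    exact le_of_le_of_eq le_top (add_top _).symm
  · have hmeas : Measurable (deriv g) := measurable_deriv g
    have hg'int : IntegrableOn (deriv g) (Set.Ioi a) :=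
      ⟨(hmeas.aestronglyMeasurable).restrict, hIlt⟩
    have hpart2 := stmt19_aux_part2 g hg hdiff a k ha0 hk0 hIlt
    have hR_nonneg : 0 ≤ ∫ x in Set.Ioi a, ‖deriv g x‖ :=
      integral_nonneg fun x => norm_nonneg _
    have hga : ‖g a‖ * k⁻¹ ≤ B2 := by
      have hd := hdecay a ha0 hal
      have hstep := mul_le_mul_of_nonneg_right hd (inv_nonneg.mpr hk0.le)
      refine le_trans hstep (le_of_eq ?_)
      rw [hloga, hB2, ha_def, show k⁻¹ = (Real.sqrt k * Real.sqrt k)⁻¹ by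
        rw [Real.mul_self_sqrt hk0.le]]
      rw [Real.div_rpow hlogk.le (by norm_num)]
      have h1 : (0:ℝ) < (Real.log k) ^ (1 + α) := Real.rpow_pos_of_pos hlogk _
      have h2 : (0:ℝ) < (2:ℝ) ^ (1 + α) := Real.rpow_pos_of_pos (by norm_num) _
      have h3 : (0:ℝ) < Real.sqrt k := by linarith
      field_simp
    have hreal : Real.sqrt (2 * π) * ‖gtilde g k‖
        ≤ (B1 + B2) + k⁻¹ * ∫ x in Set.Ioi a, ‖deriv g x‖ := by
      rw [hmain, hsplit]
      calc ‖(∫ x in Set.Ioc 0 a, G x) + ∫ x in Set.Ioi a, G x‖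
          ≤ ‖∫ x in Set.Ioc 0 a, G x‖ + ‖∫ x in Set.Ioi a, G x‖ := norm_add_le _ _
        _ ≤ B1 + (‖g a‖ * k⁻¹ + k⁻¹ * ∫ x in Set.Ioi a, ‖deriv g x‖) :=
            add_le_add hpart1 hpart2
        _ ≤ (B1 + B2) + k⁻¹ * ∫ x in Set.Ioi a, ‖deriv g x‖ := by linarith
    calc ENNReal.ofReal (Real.sqrt (2 * π) * ‖gtilde g k‖)
        ≤ ENNReal.ofReal ((B1 + B2) + k⁻¹ * ∫ x in Set.Ioi a, ‖deriv g x‖) :=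
          ENNReal.ofReal_le_ofReal hreal
      _ = ENNReal.ofReal (B1 + B2)
          + ENNReal.ofReal (k⁻¹ * ∫ x in Set.Ioi a, ‖deriv g x‖) :=
          ENNReal.ofReal_add (add_pos hB1pos hB2pos).le (mul_nonneg (inv_nonneg.mpr hk0.le) hR_nonneg)
      _ = ENNReal.ofReal (B1 + B2)
          + ENNReal.ofReal (1 / k) * ∫⁻ x in Set.Ioi a, (‖deriv g x‖₊ : ℝ≥0∞) := by
          rw [ENNReal.ofReal_mul (by positivity), one_div,
            ofReal_integral_norm_eq_lintegral_enorm hg'int]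
          rfl

end
end
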